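/- arXiv:2510.16795 — 8 statements merged into one kernel-verified Lean document; each statement's English description precedes it below -/
import Mathlib

section
/- In H(Z_{2^n}), if exactly two of the four coefficients of a + bi + cj + dk are units (odd) in Z_{2^n} and the other two are even, then the element is a zero-divisor in H(Z_{2^n}). -/
open Quaternion

lemma unit_iff_pow2 {n : ℕ} (hn : 1 ≤ n) (a : ZMod (2 ^ n)) :
    IsUnit a ↔ (ZMod.castHom (dvd_pow_self 2 (by omega : n ≠ 0)) (ZMod 2)) a = 1 := by
  haveI : NeZero (2 ^ n) := ⟨by positivity⟩
  set φ := ZMod.castHom (dvd_pow_self 2 (by omega : n ≠ 0)) (ZMod 2) with hφ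
  have ha : ((a.val : ℕ) : ZMod (2 ^ n)) = a := by
    simp [ZMod.natCast_val, ZMod.cast_id]
  constructor
  · intro h
    have h2 : IsUnit (φ a) := h.map φ
    have : φ a = 0 ∨ φ a = 1 := by
      generalize φ a = u; fin_cases u <;> simp <;> [exact Or.inl rfl; exact Or.inr rfl]
    rcases this with h0 | h1
    · rw [h0] at h2; simp at h2
    · exact h1
  · intro h
    rw [← ha, ZMod.isUnit_iff_coprime]
    have hcast : φ a = ((a.val : ℕ) : ZMod 2) := by rw [← ha]; simp [hφ]
    rw [hcast] at h
    have hmod : a.val ≡ 1 [MOD 2] := by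
      have : ((a.val : ℕ) : ZMod 2) = ((1 : ℕ) : ZMod 2) := by simpa using h
      exact (ZMod.natCast_eq_natCast_iff _ _ _).mp this
    have hodd : a.val % 2 = 1 := by
      have := hmod; unfold Nat.ModEq at this; omega
    exact Nat.Coprime.pow_right n (by
      simp [Nat.coprime_two_right, Nat.odd_iff, hodd])

/-- If exactly two of the four coefficients of `x ∈ ℍ(ℤ/2^n)` are units (odd) in
`ℤ/2^n` and the other two are even (non-units), then `x` is a zero-divisor in
`ℍ(ℤ/2^n)`. -/
theorem quaternion_two_units_two_zeroDivisors_is_zeroDivisor (n : ℕ) (hn : 1 ≤ n)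
    (x : ℍ[ZMod (2 ^ n)])
    (h : (IsUnit x.re ∧ IsUnit x.imI ∧ ¬IsUnit x.imJ ∧ ¬IsUnit x.imK) ∨
         (IsUnit x.re ∧ ¬IsUnit x.imI ∧ IsUnit x.imJ ∧ ¬IsUnit x.imK) ∨
         (IsUnit x.re ∧ ¬IsUnit x.imI ∧ ¬IsUnit x.imJ ∧ IsUnit x.imK) ∨
         (¬IsUnit x.re ∧ IsUnit x.imI ∧ IsUnit x.imJ ∧ ¬IsUnit x.imK) ∨
         (¬IsUnit x.re ∧ IsUnit x.imI ∧ ¬IsUnit x.imJ ∧ IsUnit x.imK) ∨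
         (¬IsUnit x.re ∧ ¬IsUnit x.imI ∧ IsUnit x.imJ ∧ IsUnit x.imK)) :
    ∃ y : ℍ[ZMod (2 ^ n)], y ≠ 0 ∧ (x * y = 0 ∨ y * x = 0) := by
  haveI : NeZero (2 ^ n) := ⟨by positivity⟩
  set φ := ZMod.castHom (dvd_pow_self 2 (by omega : n ≠ 0)) (ZMod 2) with hφ
  have hu : ∀ a : ZMod (2 ^ n), IsUnit a → φ a = 1 := fun a ha => (unit_iff_pow2 hn a).mp ha
  have hnu : ∀ a : ZMod (2 ^ n), ¬IsUnit a → φ a = 0 := by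
    intro a ha
    by_contra h0
    refine ha ((unit_iff_pow2 hn a).mpr ?_)
    generalize φ a = u at *
    fin_cases u <;> simp_all <;> [exact absurd rfl h0; rfl]
  set N := normSq x with hNdef
  have hN : φ N = 0 := by
    rw [hNdef, normSq_def']
    rcases h with ⟨h1, h2, h3, h4⟩ | ⟨h1, h2, h3, h4⟩ | ⟨h1, h2, h3, h4⟩ |
      ⟨h1, h2, h3, h4⟩ | ⟨h1, h2, h3, h4⟩ | ⟨h1, h2, h3, h4⟩ <;>
      first
      | (simp only [map_add, map_pow, hu _ h1, hu _ h2, hnu _ h3, hnu _ h4]; decide)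
      | (simp only [map_add, map_pow, hu _ h1, hnu _ h2, hu _ h3, hnu _ h4]; decide)
      | (simp only [map_add, map_pow, hu _ h1, hnu _ h2, hnu _ h3, hu _ h4]; decide)
      | (simp only [map_add, map_pow, hnu _ h1, hu _ h2, hu _ h3, hnu _ h4]; decide)
      | (simp only [map_add, map_pow, hnu _ h1, hu _ h2, hnu _ h3, hu _ h4]; decide)
      | (simp only [map_add, map_pow, hnu _ h1, hnu _ h2, hu _ h3, hu _ h4]; decide)
  have h2N : 2 ∣ N.val := by
    have hNcast : ((N.val : ℕ) : ZMod (2 ^ n)) = N := by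
      simp [ZMod.natCast_val, ZMod.cast_id]
    have : φ N = ((N.val : ℕ) : ZMod 2) := by rw [← hNcast]; simp [hφ]
    rw [this, ZMod.natCast_eq_zero_iff] at hN
    exact hN
  set c : ZMod (2 ^ n) := ((2 ^ (n - 1) : ℕ) : ZMod (2 ^ n)) with hcdef
  have hc : c ≠ 0 := by
    rw [hcdef, Ne, ZMod.natCast_eq_zero_iff]
    intro hdvd
    have h1 : 2 ^ (n - 1) < 2 ^ n := Nat.pow_lt_pow_right one_lt_two (by omega)
    have h2 : 2 ^ n ≤ 2 ^ (n - 1) := Nat.le_of_dvd (by positivity) hdvd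
    omega
  have hNc : N * c = 0 := by
    obtain ⟨m, hm⟩ := h2N
    have hNcast : ((N.val : ℕ) : ZMod (2 ^ n)) = N := by
      simp [ZMod.natCast_val, ZMod.cast_id]
    rw [← hNcast, hcdef, ← Nat.cast_mul, ZMod.natCast_eq_zero_iff, hm]
    have hp : 2 ^ n = 2 ^ (n - 1) * 2 := by
      rw [← pow_succ]; congr 1; omega
    exact ⟨m, by rw [hp]; ring⟩
  have key : ∀ u : ZMod (2 ^ n), IsUnit u → c * u ≠ 0 := by
    intro u hu' h0
    exact hc ((hu'.mul_left_eq_zero).mp h0)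
  refine ⟨star x * (c : ℍ[ZMod (2 ^ n)]), ?_, Or.inl ?_⟩
  · rw [mul_coe_eq_smul]
    intro h0
    rw [Quaternion.ext_iff] at h0
    simp only [re_smul, imI_smul, imJ_smul, imK_smul, re_star, imI_star, imJ_star, imK_star,
      re_zero, imI_zero, imJ_zero, imK_zero, smul_eq_mul, mul_neg, neg_eq_zero] at h0
    obtain ⟨e1, e2, e3, e4⟩ := h0
    rcases h with ⟨h1, h2, h3, h4⟩ | ⟨h1, h2, h3, h4⟩ | ⟨h1, h2, h3, h4⟩ |
      ⟨h1, h2, h3, h4⟩ | ⟨h1, h2, h3, h4⟩ | ⟨h1, h2, h3, h4⟩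
    · exact key _ h1 e1
    · exact key _ h1 e1
    · exact key _ h1 e1
    · exact key _ h2 e2
    · exact key _ h2 e2
    · exact key _ h3 e3
  · rw [← mul_assoc, self_mul_star, ← hNdef, ← coe_mul, hNc, coe_zero]
end

section
/- In H(Z_{2^n}), if all four coefficients of a + bi + cj + dk are units (odd) in Z_{2^n}, then the element is a zero-divisor in H(Z_{2^n}). -/
open Quaternion

/-- If all four coefficients of `x ∈ ℍ(ℤ/2^n)` are units (odd) in `ℤ/2^n`, then `x`
is a zero-divisor in `ℍ(ℤ/2^n)`. -/
theorem quaternion_all_units_is_zeroDivisor (n : ℕ) (hn : 1 ≤ n)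
    (x : ℍ[ZMod (2 ^ n)])
    (h1 : IsUnit x.re) (h2 : IsUnit x.imI) (h3 : IsUnit x.imJ) (h4 : IsUnit x.imK) :
    ∃ y : ℍ[ZMod (2 ^ n)], y ≠ 0 ∧ (x * y = 0 ∨ y * x = 0) := by
  haveI : NeZero (2 ^ n) := ⟨by positivity⟩
  have h2n : (2 : ℕ) ∣ 2 ^ n := dvd_pow_self 2 (by omega)
  set N : ZMod (2 ^ n) := normSq x with hNdef
  -- N is even
  have hunit1 : ∀ z : ZMod 2, z ≠ 0 → z = 1 := by decide
  have hmap : ∀ z : ZMod (2 ^ n), IsUnit z → (ZMod.castHom h2n (ZMod 2)) z = 1 := by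
    intro z hz
    exact hunit1 _ (hz.map (ZMod.castHom h2n (ZMod 2))).ne_zero
  have hNcast : (ZMod.castHom h2n (ZMod 2)) N = 0 := by
    rw [hNdef, Quaternion.normSq_def']
    simp only [map_add, map_pow, hmap _ h1, hmap _ h2, hmap _ h3, hmap _ h4]
    decide
  have hdvd : 2 ∣ N.val := by
    rw [← ZMod.natCast_eq_zero_iff]
    rw [ZMod.natCast_val]
    exact hNcast
  obtain ⟨m, hm⟩ := hdvd
  have hN2 : N = 2 * (m : ZMod (2 ^ n)) := by
    have hv : ((N.val : ℕ) : ZMod (2 ^ n)) = N := by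
      rw [ZMod.natCast_val, ZMod.cast_id]
    rw [← hv, hm]; push_cast; ring
  have hpow : ((2 : ZMod (2 ^ n)) ^ n : ZMod (2 ^ n)) = 0 := by
    have := ZMod.natCast_self (2 ^ n)
    push_cast at this
    exact this
  have key : (2 : ZMod (2 ^ n)) ^ (n - 1) * N = 0 := by
    rw [hN2, ← mul_assoc, ← pow_succ, Nat.sub_add_cancel hn, hpow, zero_mul]
  -- the zero divisor
  set c : ZMod (2 ^ n) := 2 ^ (n - 1) with hc
  refine ⟨(c : ℍ[ZMod (2 ^ n)]) * star x, ?_, Or.inl ?_⟩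
  · intro h
    have hre : ((c : ℍ[ZMod (2 ^ n)]) * star x).re = c * x.re := by
      simp [Quaternion.re_mul]
    rw [h] at hre
    have hc0 : c * x.re = 0 := hre.symm
    have hcz : c = 0 := by
      obtain ⟨u, hu⟩ := h1
      have hcu : c * ↑u = 0 := by rw [hu]; exact hc0
      exact (Units.mul_left_eq_zero u).mp hcu
    have : ((2 ^ (n - 1) : ℕ) : ZMod (2 ^ n)) = 0 := by
      rw [Nat.cast_pow, Nat.cast_ofNat]; exact hcz
    rw [ZMod.natCast_eq_zero_iff] at this
    exact absurd (Nat.pow_dvd_pow_iff_le_right (by norm_num) |>.mp this) (by omega)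
  · rw [Quaternion.coe_commutes, ← mul_assoc, Quaternion.self_mul_star, ← Quaternion.coe_mul,
      ← hNdef, mul_comm N c, hc, key, Quaternion.coe_zero]
end

section
/- The number of zero-divisors (including 0) in H(Z_{2^n}) equals 2^{4n-1}, and equals the number of units. -/
open Quaternion


section
variable {n : ℕ} (hn : 1 ≤ n)

-- abbreviations
noncomputable section

lemma two_dvd_pow (hn : 1 ≤ n) : (2 : ℕ) ∣ 2 ^ n := dvd_pow_self 2 (by omega)

lemma zmod_isUnit_iff (hn : 1 ≤ n) (c : ZMod (2 ^ n)) :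
    IsUnit c ↔ (ZMod.castHom (two_dvd_pow hn) (ZMod 2) c = 1) := by
  haveI : NeZero (2 ^ n) := ⟨pow_ne_zero n two_ne_zero⟩
  have hc : c = ((c.val : ℕ) : ZMod (2 ^ n)) := (ZMod.natCast_rightInverse c).symm
  rw [ZMod.castHom_apply, ← ZMod.natCast_val]
  constructor
  · intro h
    rw [hc, ZMod.isUnit_iff_coprime, Nat.coprime_pow_right_iff (by omega),
      Nat.coprime_two_right] at h
    rcases h with ⟨k, hk⟩
    rw [hk]; push_cast
    simp [show (2:ZMod 2) = 0 from rfl]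
  · intro h
    rw [hc, ZMod.isUnit_iff_coprime, Nat.coprime_pow_right_iff (by omega),
      Nat.coprime_two_right]
    rcases Nat.even_or_odd c.val with he | ho
    · exfalso
      rcases he with ⟨k, hk⟩
      rw [hk] at h
      push_cast at h
      rw [← two_mul, show (2:ZMod 2) = 0 from rfl, zero_mul] at h
      exact one_ne_zero h.symm
    · exact ho

end
end

section
variable {n : ℕ}

lemma quat_parity (hn : 1 ≤ n) (x : ℍ[ZMod (2 ^ n)]) :
    ZMod.castHom (two_dvd_pow hn) (ZMod 2) (Quaternion.normSq x) =
      ZMod.castHom (two_dvd_pow hn) (ZMod 2) x.re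
      + ZMod.castHom (two_dvd_pow hn) (ZMod 2) x.imI
      + ZMod.castHom (two_dvd_pow hn) (ZMod 2) x.imJ
      + ZMod.castHom (two_dvd_pow hn) (ZMod 2) x.imK := by
  have hsq : ∀ z : ZMod 2, z ^ 2 = z := by decide
  rw [Quaternion.normSq_def']
  push_cast [map_add, map_pow]
  rw [hsq, hsq, hsq, hsq]

lemma quat_isUnit_iff (hn : 1 ≤ n) (x : ℍ[ZMod (2 ^ n)]) :
    IsUnit x ↔ ZMod.castHom (two_dvd_pow hn) (ZMod 2) (Quaternion.normSq x) = 1 := by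
  rw [← zmod_isUnit_iff hn]
  constructor
  · exact fun h => h.map Quaternion.normSq
  · intro h
    obtain ⟨u, hu⟩ := h
    refine ⟨⟨x, star x * ((↑(u⁻¹ : (ZMod (2 ^ n))ˣ) : ZMod (2 ^ n)) : ℍ[ZMod (2 ^ n)]), ?_, ?_⟩, rfl⟩
    · rw [← mul_assoc, Quaternion.self_mul_star, ← Quaternion.coe_mul, ← hu,
        Units.mul_inv, Quaternion.coe_one]
    · rw [mul_assoc, Quaternion.coe_commutes, ← mul_assoc, Quaternion.star_mul_self,
        ← Quaternion.coe_mul, ← hu, Units.mul_inv, Quaternion.coe_one]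

lemma quat_isUnit_add_one (hn : 1 ≤ n) (x : ℍ[ZMod (2 ^ n)]) :
    IsUnit (x + 1) ↔ ¬ IsUnit x := by
  rw [quat_isUnit_iff hn, quat_isUnit_iff hn, quat_parity hn, quat_parity hn]
  simp only [Quaternion.re_add, Quaternion.imI_add, Quaternion.imJ_add, Quaternion.imK_add,
    Quaternion.re_one, Quaternion.imI_one, Quaternion.imJ_one, Quaternion.imK_one,
    map_add, map_one, map_zero, add_zero]
  set A := ZMod.castHom (two_dvd_pow hn) (ZMod 2) x.re with hA
  set B := ZMod.castHom (two_dvd_pow hn) (ZMod 2) x.imI with hB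
  set C := ZMod.castHom (two_dvd_pow hn) (ZMod 2) x.imJ with hC
  set D := ZMod.castHom (two_dvd_pow hn) (ZMod 2) x.imK with hD
  have key : ∀ z : ZMod 2, z + 1 = 1 ↔ ¬ z = 1 := by decide
  rw [show A + 1 + B + C + D = (A + B + C + D) + 1 by ring, key]

end

section
variable {n : ℕ}

lemma quat_zd_iff (hn : 1 ≤ n) (x : ℍ[ZMod (2 ^ n)]) :
    (x = 0 ∨ ∃ y : ℍ[ZMod (2 ^ n)], y ≠ 0 ∧ (x * y = 0 ∨ y * x = 0)) ↔ ¬ IsUnit x := by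
  haveI : NeZero (2 ^ n) := ⟨pow_ne_zero n two_ne_zero⟩
  haveI : Fact (1 < 2 ^ n) := ⟨Nat.one_lt_two_pow_iff.mpr (by omega)⟩
  constructor
  · rintro (rfl | ⟨y, hy, hxy | hyx⟩)
    · exact not_isUnit_zero
    · rintro ⟨u, rfl⟩
      apply hy
      calc y = ↑u⁻¹ * (↑u * y) := by rw [← mul_assoc, Units.inv_mul, one_mul]
        _ = 0 := by rw [hxy, mul_zero]
    · rintro ⟨u, rfl⟩
      apply hy
      calc y = (y * ↑u) * ↑u⁻¹ := by rw [mul_assoc, Units.mul_inv, mul_one]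
        _ = 0 := by rw [hyx, zero_mul]
  · intro h
    rw [quat_isUnit_iff hn] at h
    have h0 : ZMod.castHom (two_dvd_pow hn) (ZMod 2) (Quaternion.normSq x) = 0 := by
      revert h
      generalize ZMod.castHom (two_dvd_pow hn) (ZMod 2) (Quaternion.normSq x) = z
      revert z; decide
    -- normSq x is divisible by 2
    have hval : (2 : ℕ) ∣ (Quaternion.normSq x).val := by
      rwa [ZMod.castHom_apply, ← ZMod.natCast_val, ZMod.natCast_eq_zero_iff] at h0
    obtain ⟨k, hk⟩ := hval
    set t : ZMod (2 ^ n) := (((2 : ℕ) ^ (n - 1) : ℕ) : ZMod (2 ^ n)) with ht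
    have htne : t ≠ 0 := by
      rw [ht, Ne, ZMod.natCast_eq_zero_iff]
      intro hdvd
      have h1 := Nat.le_of_dvd (Nat.pow_pos (by omega)) hdvd
      have h2 : (2:ℕ) ^ (n-1) < 2 ^ n := Nat.pow_lt_pow_right (by omega) (by omega)
      omega
    have hnt : Quaternion.normSq x * t = 0 := by
      have : Quaternion.normSq x = (((Quaternion.normSq x).val : ℕ) : ZMod (2 ^ n)) :=
        (ZMod.natCast_rightInverse _).symm
      rw [this, ht, hk, ← Nat.cast_mul,
        show 2 * k * 2 ^ (n - 1) = k * 2 ^ n by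
          conv_rhs => rw [show n = (n-1) + 1 by omega, pow_succ]
          ring,
        Nat.cast_mul, ZMod.natCast_self, mul_zero]
    right
    by_cases hxt : x * ((t : ZMod (2 ^ n)) : ℍ[ZMod (2 ^ n)]) = 0
    · have : ((t : ZMod (2 ^ n)) : ℍ[ZMod (2 ^ n)]) ≠ 0 := by
        intro hc
        exact htne (Quaternion.coe_injective (by rw [hc, Quaternion.coe_zero]))
      exact ⟨_, this, Or.inl hxt⟩
    · refine ⟨star x * ((t : ZMod (2 ^ n)) : ℍ[ZMod (2 ^ n)]), ?_, Or.inl ?_⟩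
      · intro hc
        apply hxt
        have := congrArg star hc
        rwa [star_mul, Quaternion.star_coe, star_star, star_zero,
          Quaternion.coe_commutes] at this
      · rw [← mul_assoc, Quaternion.self_mul_star, ← Quaternion.coe_mul, hnt,
          Quaternion.coe_zero]

end


/-- The number of zero-divisors (including `0`) in `ℍ(ℤ/2^n)` equals `2^(4n-1)`,
which also equals the number of units. -/
theorem quaternion_card_zeroDivisors_eq_card_units (n : ℕ) (hn : 1 ≤ n) :
    Nat.card {x : ℍ[ZMod (2 ^ n)] |
        x = 0 ∨ ∃ y : ℍ[ZMod (2 ^ n)], y ≠ 0 ∧ (x * y = 0 ∨ y * x = 0)} = 2 ^ (4 * n - 1) ∧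
    Nat.card {x : ℍ[ZMod (2 ^ n)] | IsUnit x} = 2 ^ (4 * n - 1) := by
  haveI : NeZero (2 ^ n) := ⟨pow_ne_zero n two_ne_zero⟩
  haveI : Finite (ℍ[ZMod (2 ^ n)]) := Finite.of_equiv _ (Quaternion.equivProd (ZMod (2 ^ n))).symm
  set U : Set (ℍ[ZMod (2 ^ n)]) := {x | IsUnit x} with hU
  have hSU : {x : ℍ[ZMod (2 ^ n)] |
      x = 0 ∨ ∃ y : ℍ[ZMod (2 ^ n)], y ≠ 0 ∧ (x * y = 0 ∨ y * x = 0)} = Uᶜ := by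
    ext x
    simpa [hU] using quat_zd_iff hn x
  -- bijection between U and Uᶜ
  have hcard_eq : Nat.card U = Nat.card (↥(Uᶜ)) := by
    apply Nat.card_congr
    exact (Equiv.addRight (1 : ℍ[ZMod (2 ^ n)])).subtypeEquiv fun x => by
      simpa [hU] using iff_not_comm.mp (quat_isUnit_add_one hn x)
  have htotal : Nat.card U + Nat.card (↥(Uᶜ)) = 2 ^ (4 * n) := by
    rw [Nat.card_coe_set_eq, Nat.card_coe_set_eq, Set.ncard_add_ncard_compl]
    rw [Nat.card_congr (Quaternion.equivProd (ZMod (2 ^ n))),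
      Nat.card_prod, Nat.card_prod, Nat.card_prod, Nat.card_zmod]
    ring
  have hsplit : (2:ℕ) ^ (4 * n) = 2 ^ (4 * n - 1) + 2 ^ (4 * n - 1) := by
    conv_lhs => rw [show 4 * n = (4 * n - 1) + 1 by omega, pow_succ]
    omega
  rw [hSU]
  omega
end

section
/- In Φ(H(Z_{2^n})), the vertex 2^{n-1}(1 + i + j + k) is adjacent to a vertex b if and only if b is a unit of H(Z_{2^n}); in particular it is not adjacent to any zero-divisor vertex. -/
open Quaternion

/-- The vertex set of the non-zero divisor graph of `ℍ(ℤ/2^n)`: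
all elements except `0`, `1`, `-1`. -/
def Vtx (n : ℕ) : Type :=
  {x : ℍ[ZMod (2 ^ n)] // x ≠ 0 ∧ x ≠ 1 ∧ x ≠ -1}

/-- The non-zero divisor graph `Φ(ℍ(ℤ/2^n))`: distinct vertices `x`, `y` are
adjacent iff `xy ≠ 0` or `yx ≠ 0`. -/
def Phi (n : ℕ) : SimpleGraph (Vtx n) where
  Adj x y := x ≠ y ∧ (x.1 * y.1 ≠ 0 ∨ y.1 * x.1 ≠ 0)
  symm := ⟨fun x y h => ⟨h.1.symm, h.2.symm⟩⟩
  loopless := ⟨fun x h => h.1 rfl⟩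

section Aux

variable {n : ℕ}

lemma aux_neZero (hn : 1 ≤ n) : NeZero (2 ^ n) := ⟨by positivity⟩

/-- The reduction map to `ZMod 2`. -/
noncomputable def pr (n : ℕ) (hn : 1 ≤ n) : ZMod (2 ^ n) →+* ZMod 2 :=
  ZMod.castHom (dvd_pow_self 2 (by omega : n ≠ 0)) (ZMod 2)

lemma pr_natCast (hn : 1 ≤ n) (m : ℕ) : pr n hn (m : ZMod (2 ^ n)) = (m : ZMod 2) :=
  map_natCast _ m

lemma aux_isUnit_iff (hn : 1 ≤ n) (x : ZMod (2 ^ n)) :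
    IsUnit x ↔ pr n hn x ≠ 0 := by
  haveI : NeZero (2 ^ n) := aux_neZero hn
  have hx : ((x.val : ℕ) : ZMod (2 ^ n)) = x := ZMod.natCast_rightInverse x
  rw [← hx, ZMod.isUnit_iff_coprime, pr_natCast, Ne, ZMod.natCast_eq_zero_iff,
    Nat.coprime_pow_right_iff (by omega), Nat.coprime_comm,
    Nat.Prime.coprime_iff_not_dvd Nat.prime_two]

lemma aux_mul_eq_zero_iff (hn : 1 ≤ n) (x : ZMod (2 ^ n)) :
    (2 ^ (n - 1) : ZMod (2 ^ n)) * x = 0 ↔ pr n hn x = 0 := by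
  haveI : NeZero (2 ^ n) := aux_neZero hn
  have hx : ((x.val : ℕ) : ZMod (2 ^ n)) = x := ZMod.natCast_rightInverse x
  have ht : (2 ^ (n - 1) : ZMod (2 ^ n)) = ((2 ^ (n - 1) : ℕ) : ZMod (2 ^ n)) := by
    push_cast; ring
  rw [← hx, pr_natCast, ZMod.natCast_eq_zero_iff, ht, ← Nat.cast_mul,
    ZMod.natCast_eq_zero_iff]
  have hpow : 2 ^ n = 2 ^ (n - 1) * 2 := by
    rw [← pow_succ]; congr 1; omega
  generalize x.val = k
  rw [hpow, Nat.mul_dvd_mul_iff_left (by positivity : 0 < 2 ^ (n - 1))]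

end Aux

/-- The vertex `2^(n-1)(1 + i + j + k)` of `Φ(ℍ(ℤ/2^n))` is adjacent to a vertex `b`
iff `b` is a unit of `ℍ(ℤ/2^n)`; in particular it is adjacent to no zero-divisor vertex. -/
theorem special_vertex_adj_iff_isUnit (n : ℕ) (hn : 1 ≤ n) (c : Vtx n)
    (hc : c.1 = (⟨2 ^ (n - 1), 2 ^ (n - 1), 2 ^ (n - 1), 2 ^ (n - 1)⟩ : ℍ[ZMod (2 ^ n)]))
    (b : Vtx n) :
    (Phi n).Adj c b ↔ IsUnit b.1 := by
  haveI : NeZero (2 ^ n) := aux_neZero hn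
  set π := pr n hn with hπdef
  set t : ZMod (2 ^ n) := 2 ^ (n - 1) with htdef
  set p := b.1.re with hp
  set q := b.1.imI with hq
  set r := b.1.imJ with hr
  set s := b.1.imK with hs
  set σ := π p + π q + π r + π s with hσdef
  have hb1 : b.1 = (⟨p, q, r, s⟩ : ℍ[ZMod (2 ^ n)]) := rfl
  have hcomb : ∀ x : ZMod (2 ^ n), π x = σ → (t * x = 0 ↔ σ = 0) := by
    intro x hx
    rw [htdef, aux_mul_eq_zero_iff hn, ← hπdef, hx]
  have hπ1 : π (p - q - r - s) = σ := by
    simp only [map_sub, hσdef, CharTwo.sub_eq_add]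
  have hπ2 : π (p + q - r + s) = σ := by
    simp only [map_sub, map_add, hσdef, CharTwo.sub_eq_add]
  have hπ3 : π (p + q + r - s) = σ := by
    simp only [map_sub, map_add, hσdef, CharTwo.sub_eq_add]
  have hπ4 : π (p - q + r + s) = σ := by
    simp only [map_sub, map_add, hσdef, CharTwo.sub_eq_add]
  have hπ5 : π (p + q + r - s) = σ := hπ3
  have hπ6 : π (p - q + r + s) = σ := hπ4
  have hπ7 : π (p + q - r + s) = σ := hπ2
  have hcb : c.1 * b.1 = 0 ↔ σ = 0 := by
    have hmul : c.1 * b.1 =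
        (⟨t * (p - q - r - s), t * (p + q - r + s), t * (p + q + r - s),
          t * (p - q + r + s)⟩ : ℍ[ZMod (2 ^ n)]) := by
      rw [hc, hb1]
      ext
      · erw [Quaternion.re_mul]; dsimp only; ring
      · erw [Quaternion.imI_mul]; dsimp only; ring
      · erw [Quaternion.imJ_mul]; dsimp only; ring
      · erw [Quaternion.imK_mul]; dsimp only; ring
    rw [hmul]; refine Quaternion.ext_iff.trans ?_
    simp only [Quaternion.re_zero, Quaternion.imI_zero, Quaternion.imJ_zero,
      Quaternion.imK_zero]
    rw [hcomb _ hπ1, hcomb _ hπ2, hcomb _ hπ3, hcomb _ hπ4]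
    tauto
  have hbc : b.1 * c.1 = 0 ↔ σ = 0 := by
    have hmul : b.1 * c.1 =
        (⟨t * (p - q - r - s), t * (p + q + r - s), t * (p - q + r + s),
          t * (p + q - r + s)⟩ : ℍ[ZMod (2 ^ n)]) := by
      rw [hc, hb1]
      ext
      · erw [Quaternion.re_mul]; dsimp only; ring
      · erw [Quaternion.imI_mul]; dsimp only; ring
      · erw [Quaternion.imJ_mul]; dsimp only; ring
      · erw [Quaternion.imK_mul]; dsimp only; ring
    rw [hmul]; refine Quaternion.ext_iff.trans ?_
    simp only [Quaternion.re_zero, Quaternion.imI_zero, Quaternion.imJ_zero,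
      Quaternion.imK_zero]
    rw [hcomb _ hπ1, hcomb _ hπ5, hcomb _ hπ6, hcomb _ hπ7]
    tauto
  have hns : π (Quaternion.normSq b.1) = σ := by
    rw [Quaternion.normSq_def']
    simp only [map_add, map_pow, ← hp, ← hq, ← hr, ← hs]
    rw [hσdef, ZMod.pow_card, ZMod.pow_card, ZMod.pow_card, ZMod.pow_card]
  have hunit : IsUnit b.1 ↔ σ ≠ 0 := by
    constructor
    · intro h
      have h2 : IsUnit (Quaternion.normSq b.1) := h.map (Quaternion.normSq)
      rw [aux_isUnit_iff hn, ← hπdef, hns] at h2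
      exact h2
    · intro hσ0
      have h2 : IsUnit (Quaternion.normSq b.1) := by
        rw [aux_isUnit_iff hn, ← hπdef, hns]; exact hσ0
      obtain ⟨v, hv⟩ := h2
      set w : ZMod (2 ^ n) := ((v⁻¹ : (ZMod (2 ^ n))ˣ) : ZMod (2 ^ n)) with hw
      have hvw : Quaternion.normSq b.1 * w = 1 := by
        rw [← hv, hw]; exact_mod_cast v.mul_inv
      have hwv : w * Quaternion.normSq b.1 = 1 := by
        rw [← hv, hw]; exact_mod_cast v.inv_mul
      refine ⟨⟨b.1, star b.1 * (w : ℍ[ZMod (2 ^ n)]), ?_, ?_⟩, rfl⟩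
      · rw [← mul_assoc, Quaternion.self_mul_star, ← Quaternion.coe_mul, hvw,
          Quaternion.coe_one]
      · rw [mul_assoc, Quaternion.coe_commutes, ← mul_assoc,
          Quaternion.star_mul_self, ← Quaternion.coe_mul, hvw, Quaternion.coe_one]
  rw [hunit]
  constructor
  · rintro ⟨hne, h⟩
    by_contra hσ0
    rcases h with h | h
    · exact h (hcb.mpr hσ0)
    · exact h (hbc.mpr hσ0)
  · intro hσ0
    refine ⟨?_, Or.inl fun h0 => hσ0 (hcb.mp h0)⟩
    intro heq
    apply hσ0
    have hbt : b.1 = (⟨t, t, t, t⟩ : ℍ[ZMod (2 ^ n)]) := heq ▸ hc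
    rw [hσdef, hp, hq, hr, hs, hbt]
    show π t + π t + π t + π t = 0
    simp [CharTwo.add_self_eq_zero]
end

section
/- The graph Φ(H(Z_{2^n})) is connected and has diameter exactly 2. -/
open Quaternion

section Aux

variable (n : ℕ)

/-- the quaternion `i` -/
def qi : ℍ[ZMod (2 ^ n)] := ⟨0, 1, 0, 0⟩

lemma qi_mul_qi : qi n * qi n = -1 := by
  ext <;> simp [qi, Quaternion.ext_iff] <;> erw [QuaternionAlgebra.mk_mul_mk] <;> simp

lemma mul_qi_ne_zero {x : ℍ[ZMod (2 ^ n)]} (hx : x ≠ 0) : x * qi n ≠ 0 := by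
  intro h
  apply hx
  have := congrArg (· * qi n) h
  simp only [mul_assoc, qi_mul_qi, zero_mul, mul_neg, mul_one] at this
  simpa using this

end Aux

section Aux2

variable (n : ℕ) (hn : 1 ≤ n)

include hn

lemma one_lt_two_pow : 1 < 2 ^ n := by
  calc 1 < 2 ^ 1 := by norm_num
  _ ≤ 2 ^ n := Nat.pow_le_pow_right (by norm_num) hn

lemma zmod_one_ne_zero : (1 : ZMod (2 ^ n)) ≠ 0 := by
  haveI : Fact (1 < 2 ^ n) := ⟨one_lt_two_pow n hn⟩
  exact one_ne_zero

/-- `i` as a vertex -/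
def iVtx : Vtx n := by
  refine ⟨qi n, ?_, ?_, ?_⟩ <;>
  · intro h
    have := congrArg QuaternionAlgebra.imI h
    simp [qi] at this
    exact zmod_one_ne_zero n hn this

lemma adj_iVtx {x : Vtx n} (hx : x ≠ iVtx n hn) : (Phi n).Adj x (iVtx n hn) :=
  show _ ∧ _ from ⟨hx, Or.inl (mul_qi_ne_zero n x.2.1)⟩

/-- common walk of length 2 through `i` -/
lemma dist_le_two (x y : Vtx n) : (Phi n).dist x y ≤ 2 := by
  by_cases hxy : x = y
  · subst hxy
    simp [SimpleGraph.dist_self]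
  by_cases hadj : (Phi n).Adj x y
  · calc (Phi n).dist x y ≤ hadj.toWalk.length := SimpleGraph.dist_le _
    _ ≤ 2 := by simp
  by_cases hxi : x = iVtx n hn
  · subst hxi
    exact absurd ((adj_iVtx n hn (Ne.symm hxy)).symm) hadj
  by_cases hyi : y = iVtx n hn
  · subst hyi
    exact absurd (adj_iVtx n hn hxy) hadj
  · exact le_trans (SimpleGraph.dist_le
      (SimpleGraph.Walk.cons (adj_iVtx n hn hxi)
        (SimpleGraph.Walk.cons ((adj_iVtx n hn hyi).symm) SimpleGraph.Walk.nil)))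
      (by simp)

lemma phi_connected : (Phi n).Connected := by
  haveI : Nonempty (Vtx n) := ⟨iVtx n hn⟩
  constructor
  intro x y
  by_cases hxi : x = iVtx n hn
  · subst hxi
    by_cases hyi : y = iVtx n hn
    · exact hyi ▸ SimpleGraph.Reachable.refl _
    · exact ((adj_iVtx n hn hyi).symm).reachable
  · exact ((adj_iVtx n hn hxi).reachable.trans
      (by
        by_cases hyi : y = iVtx n hn
        · exact hyi ▸ SimpleGraph.Reachable.refl _
        · exact ((adj_iVtx n hn hyi).symm).reachable))

end Aux2

section Pair

variable (n : ℕ) (hn : 1 ≤ n)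

/-- `c = 2^(n-1)` in `ZMod (2^n)` -/
def cc : ZMod (2 ^ n) := (2 ^ (n - 1) : ℕ)

include hn

lemma cc_ne_zero : cc n ≠ 0 := by
  rw [cc, Ne, ZMod.natCast_eq_zero_iff]
  intro h
  have := Nat.le_of_dvd (by positivity) h
  have := Nat.pow_lt_pow_right (a := 2) (by norm_num) (Nat.sub_lt hn one_pos)
  omega

lemma cc_sq_two : cc n * cc n * 2 = 0 := by
  rw [cc]
  have : ((2 ^ (n - 1) : ℕ) : ZMod (2 ^ n)) * (2 ^ (n - 1) : ℕ) * 2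
      = ((2 ^ (n - 1) * 2 ^ (n - 1) * 2 : ℕ) : ZMod (2 ^ n)) := by push_cast; ring
  rw [this, ZMod.natCast_eq_zero_iff]
  rw [← pow_add, ← pow_succ]
  exact pow_dvd_pow 2 (by omega)

/-- first element of the distance-2 pair: `2^(n-1)(1+i)` -/
def xq : ℍ[ZMod (2 ^ n)] := ⟨cc n, cc n, 0, 0⟩

/-- second element: `2^(n-1)(1+i+j+k)` -/
def yq : ℍ[ZMod (2 ^ n)] := ⟨cc n, cc n, cc n, cc n⟩

lemma xq_mul_yq : xq n * yq n = 0 := by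
  have h := cc_sq_two n hn
  ext <;> simp [xq, yq] <;> erw [QuaternionAlgebra.mk_mul_mk] <;> simp <;>
    first
      | linear_combination h
      | linear_combination -h
      | (ring_nf; ring_nf at h; exact h)
      | (ring_nf; ring_nf at h; exact neg_eq_zero.mpr h)

lemma yq_mul_xq : yq n * xq n = 0 := by
  have h := cc_sq_two n hn
  ext <;> simp [xq, yq] <;> erw [QuaternionAlgebra.mk_mul_mk] <;> simp <;>
    first
      | linear_combination h
      | linear_combination -h
      | (ring_nf; ring_nf at h; exact h)
      | (ring_nf; ring_nf at h; exact neg_eq_zero.mpr h)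

/-- `xq` as a vertex -/
def xV : Vtx n := by
  refine ⟨xq n, ?_, ?_, ?_⟩ <;>
  · intro h
    have := congrArg QuaternionAlgebra.imI h
    simp [xq] at this
    exact cc_ne_zero n hn this

/-- `yq` as a vertex -/
def yV : Vtx n := by
  refine ⟨yq n, ?_, ?_, ?_⟩ <;>
  · intro h
    have := congrArg QuaternionAlgebra.imI h
    simp [yq] at this
    exact cc_ne_zero n hn this

lemma xV_ne_yV : xV n hn ≠ yV n hn := by
  intro h
  have := congrArg (fun v : Vtx n => (v.1).imJ) h
  simp [xV, yV, xq, yq] at this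
  exact cc_ne_zero n hn this.symm

lemma not_adj_xV_yV : ¬ (Phi n).Adj (xV n hn) (yV n hn) := by
  rintro (⟨-, h | h⟩ : _ ∧ _)
  · exact h (xq_mul_yq n hn)
  · exact h (yq_mul_xq n hn)

lemma dist_xV_yV : (Phi n).dist (xV n hn) (yV n hn) = 2 := by
  have h2 := dist_le_two n hn (xV n hn) (yV n hn)
  have h0 : (Phi n).dist (xV n hn) (yV n hn) ≠ 0 := by
    intro h
    exact xV_ne_yV n hn ((phi_connected n hn).dist_eq_zero_iff.mp h)
  have h1 : (Phi n).dist (xV n hn) (yV n hn) ≠ 1 := by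
    rw [Ne, SimpleGraph.dist_eq_one_iff_adj]
    exact not_adj_xV_yV n hn
  omega

end Pair

/-- `Φ(ℍ(ℤ/2^n))` is connected and has diameter exactly `2`. -/
theorem Phi_connected_and_diam_two (n : ℕ) (hn : 1 ≤ n) :
    (Phi n).Connected ∧ (∀ x y : Vtx n, (Phi n).dist x y ≤ 2) ∧
      ∃ x y : Vtx n, (Phi n).dist x y = 2 := by
  exact ⟨phi_connected n hn, dist_le_two n hn, xV n hn, yV n hn, dist_xV_yV n hn⟩
end

section
/- In Φ(H(Z_{2^n})), the minimum vertex degree equals the number of unit vertices: 2^{4n-1} - 1 when n = 1, and 2^{4n-1} - 2 when n > 1; moreover the degree of the vertex 2^{n-1}(1+i+j+k) attains this minimum. -/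
open Quaternion

noncomputable instance (n : ℕ) : Fintype (ℍ[ZMod (2 ^ n)]) :=
  Fintype.ofEquiv (Fin 4 → ZMod (2 ^ n)) (QuaternionAlgebra.equivTuple (-1) 0 (-1)).symm

open scoped Classical in
noncomputable instance (n : ℕ) : Fintype (Vtx n) :=
  Subtype.fintype _

/-! ### Auxiliary lemmas -/

lemma PhiAux.zl1 (n : ℕ) (hn : 1 ≤ n) (f : ZMod (2^n) →+* ZMod 2) (z : ZMod (2^n)) :
    (2^(n-1) : ZMod (2^n)) * z = 0 ↔ f z = 0 := by
  haveI : NeZero (2^n) := ⟨pow_ne_zero n two_ne_zero⟩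
  obtain ⟨m, rfl⟩ := ZMod.natCast_zmod_surjective z
  rw [map_natCast, ZMod.natCast_eq_zero_iff,
    show (2 : ZMod (2^n))^(n-1) * (m : ZMod (2^n)) = ((2^(n-1) * m : ℕ) : ZMod (2^n)) by
      push_cast; ring,
    ZMod.natCast_eq_zero_iff]
  constructor
  · intro h
    have h2 : 2^(n-1) * 2 ∣ 2^(n-1) * m := by
      rw [← pow_succ]; convert h using 2; omega
    exact (Nat.mul_dvd_mul_iff_left (Nat.pow_pos two_pos)).mp h2
  · intro h
    have h2 : 2^(n-1) * 2 ∣ 2^(n-1) * m := Nat.mul_dvd_mul_left _ h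
    rw [← pow_succ] at h2; convert h2 using 2; omega

lemma PhiAux.zl2 (n : ℕ) (f : ZMod (2^n) →+* ZMod 2) (z : ZMod (2^n)) (h : f z ≠ 0) :
    IsUnit z := by
  haveI : NeZero (2^n) := ⟨pow_ne_zero n two_ne_zero⟩
  obtain ⟨m, rfl⟩ := ZMod.natCast_zmod_surjective z
  rw [map_natCast, Ne, ZMod.natCast_eq_zero_iff] at h
  rw [ZMod.isUnit_iff_coprime]
  exact Nat.Coprime.pow_right _
    (Nat.coprime_two_right.mpr (Nat.odd_iff.mpr (Nat.two_dvd_ne_zero.mp h)))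

lemma PhiAux.ql1 {R : Type*} [CommRing R] (a : ℍ[R]) (h : IsUnit (normSq a)) : IsUnit a := by
  obtain ⟨u, hu⟩ := h
  refine ⟨⟨a, ((u⁻¹ : Rˣ) : R) • star a, ?_, ?_⟩, rfl⟩
  · rw [mul_smul_comm, self_mul_star, ← hu, ← Quaternion.coe_smul, smul_eq_mul,
      Units.inv_mul, Quaternion.coe_one]
  · rw [smul_mul_assoc, star_mul_self, ← hu, ← Quaternion.coe_smul, smul_eq_mul,
      Units.inv_mul, Quaternion.coe_one]

/-- The mod-2 sum of the four components of a quaternion over `ZMod (2^n)`. -/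
def PhiAux.gmap {n : ℕ} (f : ZMod (2^n) →+* ZMod 2) (a : ℍ[ZMod (2^n)]) : ZMod 2 :=
  f a.re + f a.imI + f a.imJ + f a.imK

namespace PhiAux

lemma ql3 {n : ℕ} (f : ZMod (2^n) →+* ZMod 2) (a : ℍ[ZMod (2^n)]) :
    f (normSq a) = gmap f a := by
  have sq_eq : ∀ x : ZMod 2, x^2 = x := by decide
  rw [normSq_def', gmap, map_add, map_add, map_add, map_pow, map_pow, map_pow, map_pow,
    sq_eq, sq_eq, sq_eq, sq_eq]

lemma isUnit_of_gmap_ne {n : ℕ} (f : ZMod (2^n) →+* ZMod 2) (a : ℍ[ZMod (2^n)])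
    (h : gmap f a ≠ 0) : IsUnit a :=
  ql1 a (zl2 n f _ (by rwa [ql3]))

lemma fcomb {n : ℕ} (f : ZMod (2^n) →+* ZMod 2) (a : ℍ[ZMod (2^n)])
    (z : ZMod (2^n)) (hz : z = a.re + a.imI + a.imJ + a.imK ∨ z = a.re - a.imI - a.imJ - a.imK
      ∨ z = a.re + a.imI - a.imJ + a.imK ∨ z = a.re + a.imI + a.imJ - a.imK
      ∨ z = a.re - a.imI + a.imJ + a.imK) :
    f z = gmap f a := by
  have neg : ∀ x : ZMod 2, -x = x := by decide
  rcases hz with rfl | rfl | rfl | rfl | rfl <;>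
    simp only [gmap, map_add, map_sub, sub_eq_add_neg, map_neg, neg] <;> ring

lemma cmul {n : ℕ} (hn : 1 ≤ n) (f : ZMod (2^n) →+* ZMod 2) (c y : ℍ[ZMod (2^n)])
    (h0 : c.re = 2^(n-1)) (h1 : c.imI = 2^(n-1)) (h2 : c.imJ = 2^(n-1)) (h3 : c.imK = 2^(n-1)) :
    (c * y = 0 ↔ gmap f y = 0) ∧ (y * c = 0 ↔ gmap f y = 0) := by
  set t : ZMod (2^n) := 2^(n-1) with ht
  have key : ∀ z : ZMod (2^n), t * z = 0 ↔ f z = 0 := zl1 n hn f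
  have h2t : t * 2 = 0 := by
    have h : ((2^n : ℕ) : ZMod (2^n)) = 0 := ZMod.natCast_self _
    push_cast at h
    rw [ht, ← pow_succ, show n - 1 + 1 = n by omega]; exact h
  constructor
  · rw [Quaternion.ext_iff]
    simp only [Quaternion.re_mul, Quaternion.imI_mul, Quaternion.imJ_mul, Quaternion.imK_mul,
      Quaternion.re_zero, Quaternion.imI_zero, Quaternion.imJ_zero, Quaternion.imK_zero,
      h0, h1, h2, h3]
    constructor
    · rintro ⟨hh, -, -, -⟩
      rw [← fcomb f y (y.re - y.imI - y.imJ - y.imK) (by tauto), ← key, mul_sub, mul_sub,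
        mul_sub]; exact hh
    · intro hg
      refine ⟨?_, ?_, ?_, ?_⟩
      · have := (key _).mpr ((fcomb f y (y.re - y.imI - y.imJ - y.imK) (by tauto)).trans hg)
        rw [mul_sub, mul_sub, mul_sub] at this; linear_combination this
      · have := (key _).mpr ((fcomb f y (y.re + y.imI + y.imJ - y.imK) (by tauto)).trans hg)
        rw [mul_sub, mul_add, mul_add] at this
        linear_combination this + (y.imK - y.imJ) * h2t
      · have := (key _).mpr ((fcomb f y (y.re - y.imI + y.imJ + y.imK) (by tauto)).trans hg)
        rw [mul_add, mul_add, mul_sub] at this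
        linear_combination this + (y.imI - y.imK) * h2t
      · have := (key _).mpr ((fcomb f y (y.re + y.imI - y.imJ + y.imK) (by tauto)).trans hg)
        rw [mul_add, mul_sub, mul_add] at this
        linear_combination this + (y.imJ - y.imI) * h2t
  · rw [Quaternion.ext_iff]
    simp only [Quaternion.re_mul, Quaternion.imI_mul, Quaternion.imJ_mul, Quaternion.imK_mul,
      Quaternion.re_zero, Quaternion.imI_zero, Quaternion.imJ_zero, Quaternion.imK_zero,
      h0, h1, h2, h3]
    constructor
    · rintro ⟨hh, -, -, -⟩
      rw [← fcomb f y (y.re - y.imI - y.imJ - y.imK) (by tauto), ← key]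
      linear_combination hh
    · intro hg
      refine ⟨?_, ?_, ?_, ?_⟩
      · have := (key _).mpr ((fcomb f y (y.re - y.imI - y.imJ - y.imK) (by tauto)).trans hg)
        linear_combination this
      · have := (key _).mpr ((fcomb f y (y.re + y.imI - y.imJ + y.imK) (by tauto)).trans hg)
        linear_combination this + (y.imJ - y.imK) * h2t
      · have := (key _).mpr ((fcomb f y (y.re + y.imI + y.imJ - y.imK) (by tauto)).trans hg)
        linear_combination this + (y.imK - y.imI) * h2t
      · have := (key _).mpr ((fcomb f y (y.re - y.imI + y.imJ + y.imK) (by tauto)).trans hg)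
        linear_combination this + (y.imI - y.imJ) * h2t

lemma cardH (n : ℕ) : Fintype.card (ℍ[ZMod (2^n)]) = 2^(4*n) := by
  haveI : NeZero (2^n) := ⟨pow_ne_zero n two_ne_zero⟩
  have e : (Fin 4 → ZMod (2^n)) ≃ ℍ[ZMod (2^n)] := (QuaternionAlgebra.equivTuple (-1) 0 (-1)).symm
  rw [Fintype.card_congr e.symm, Fintype.card_fun, ZMod.card, Fintype.card_fin, ← pow_mul,
    mul_comm]

open scoped Classical in
lemma halfcard (n : ℕ) (hn : 1 ≤ n) (f : ZMod (2^n) →+* ZMod 2) :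
    (Finset.univ.filter fun a : ℍ[ZMod (2^n)] => gmap f a ≠ 0).card = 2^(4*n - 1) := by
  have gadd : ∀ a : ℍ[ZMod (2^n)], gmap f (a + 1) = gmap f a + 1 := by
    intro a
    simp only [gmap, Quaternion.re_add, Quaternion.imI_add, Quaternion.imJ_add,
      Quaternion.imK_add, Quaternion.re_one, Quaternion.imI_one, Quaternion.imJ_one,
      Quaternion.imK_one, map_add, map_one, map_zero]
    ring
  have flip : ∀ x : ZMod 2, x = 0 ↔ x + 1 ≠ 0 := by decide
  have hbij : (Finset.univ.filter fun a : ℍ[ZMod (2^n)] => gmap f a = 0).card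
      = (Finset.univ.filter fun a : ℍ[ZMod (2^n)] => gmap f a ≠ 0).card := by
    apply Finset.card_bij (fun a _ => a + 1)
    · intro a ha
      simp only [Finset.mem_filter, Finset.mem_univ, true_and] at ha ⊢
      rw [gadd]; exact (flip _).mp ha
    · intro a _ b _ h; exact add_right_cancel h
    · intro b hb
      simp only [Finset.mem_filter, Finset.mem_univ, true_and] at hb
      have hb1 : b - 1 + 1 = b := sub_add_cancel b 1
      refine ⟨b - 1, ?_, hb1⟩
      simp only [Finset.mem_filter, Finset.mem_univ, true_and]
      rw [flip, ← gadd, hb1]; exact hb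
  have hsplit := Finset.card_filter_add_card_filter_not
    (s := (Finset.univ : Finset (ℍ[ZMod (2^n)]))) (p := fun a => gmap f a = 0)
  rw [Finset.card_univ, cardH] at hsplit
  have h4 : 1 ≤ 4 * n := by omega
  simp only [ne_eq] at hbij ⊢
  have : 2^(4*n) = 2^(4*n-1) * 2 := by rw [← pow_succ]; congr 1; omega
  omega

end PhiAux

open PhiAux in
open scoped Classical in
/-- In `Φ(ℍ(ℤ/2^n))`, the vertex `2^(n-1)(1+i+j+k)` has minimum degree, and this
minimum degree (the number of unit vertices) is `2^(4n-1) - 1` when `n = 1` and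
`2^(4n-1) - 2` when `n > 1`. -/
theorem Phi_minDegree (n : ℕ) (hn : 1 ≤ n) (c : Vtx n)
    (hc : c.1 = (⟨2 ^ (n - 1), 2 ^ (n - 1), 2 ^ (n - 1), 2 ^ (n - 1)⟩ : ℍ[ZMod (2 ^ n)])) :
    (∀ x : Vtx n, (Phi n).degree c ≤ (Phi n).degree x) ∧
      (Phi n).degree c = (if n = 1 then 2 ^ (4 * n - 1) - 1 else 2 ^ (4 * n - 1) - 2) := by
  have hdvd : (2 : ℕ) ∣ 2^n := dvd_pow_self 2 (by omega)
  set f : ZMod (2^n) →+* ZMod 2 := ZMod.castHom hdvd (ZMod 2) with hf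
  -- component values of c
  have h0 : c.1.re = 2^(n-1) := by rw [hc]
  have h1 : c.1.imI = 2^(n-1) := by rw [hc]
  have h2 : c.1.imJ = 2^(n-1) := by rw [hc]
  have h3 : c.1.imK = 2^(n-1) := by rw [hc]
  have gc0 : gmap f c.1 = 0 := by
    have : ∀ x : ZMod 2, x + x + x + x = 0 := by decide
    rw [gmap, h0, h1, h2, h3]; exact this _
  -- adjacency characterization for c
  have hadj : ∀ y : Vtx n, (Phi n).Adj c y ↔ gmap f y.1 ≠ 0 := by
    intro y
    constructor
    · rintro (⟨-, h | h⟩ : _ ∧ _) <;> intro hg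
      · exact h ((cmul hn f c.1 y.1 h0 h1 h2 h3).1.mpr hg)
      · exact h ((cmul hn f c.1 y.1 h0 h1 h2 h3).2.mpr hg)
    · intro hg
      refine show _ ∧ _ from ⟨fun hcy => hg (hcy ▸ gc0), Or.inl fun h => hg ?_⟩
      exact (cmul hn f c.1 y.1 h0 h1 h2 h3).1.mp h
  have hnbhd : (Phi n).neighborFinset c = Finset.univ.filter fun y : Vtx n => gmap f y.1 ≠ 0 := by
    ext y
    rw [SimpleGraph.mem_neighborFinset, hadj y, Finset.mem_filter]
    simp
  -- the degree of c
  have hdegc : (Phi n).degree c = (Finset.univ.filter fun y : Vtx n => gmap f y.1 ≠ 0).card := by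
    rw [SimpleGraph.degree, hnbhd]
  constructor
  · -- minimality
    intro x
    rw [hdegc]
    by_cases hx : gmap f x.1 = 0
    · apply Finset.card_le_card
      intro y hy
      rw [Finset.mem_filter] at hy
      rw [SimpleGraph.mem_neighborFinset]
      exact show _ ∧ _ from ⟨fun hxy => hy.2 (hxy ▸ hx),
        Or.inl fun h => x.2.1 ((isUnit_of_gmap_ne f y.1 hy.2).mul_left_eq_zero.mp h)⟩
    · -- x is a unit vertex
      have hxu := isUnit_of_gmap_ne f x.1 hx
      set s : Finset (Vtx n) := Finset.univ.filter fun y : Vtx n => gmap f y.1 ≠ 0 with hs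
      have hxs : x ∈ s := by simp [hs, hx]
      have hcns : c ∉ s.erase x := fun h =>
        (Finset.mem_filter.mp (Finset.mem_of_mem_erase h)).2 gc0
      have hsub : insert c (s.erase x) ⊆ (Phi n).neighborFinset x := by
        intro y hy
        rw [SimpleGraph.mem_neighborFinset]
        rcases Finset.mem_insert.mp hy with h | hy
        · rw [h]
          exact show _ ∧ _ from ⟨fun hxy => hx (hxy ▸ gc0),
            Or.inl fun hm => c.2.1 (hxu.mul_right_eq_zero.mp hm)⟩
        · obtain ⟨hyx, hyf⟩ := Finset.mem_erase.mp hy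
          exact show _ ∧ _ from ⟨hyx.symm, Or.inl fun h => x.2.1
            ((isUnit_of_gmap_ne f y.1 (Finset.mem_filter.mp hyf).2).mul_left_eq_zero.mp h)⟩
      calc s.card = (s.erase x).card + 1 := by
            rw [Finset.card_erase_of_mem hxs]
            have : 1 ≤ s.card := Finset.card_pos.mpr ⟨x, hxs⟩
            omega
        _ = (insert c (s.erase x)).card := (Finset.card_insert_of_notMem hcns).symm
        _ ≤ (Phi n).degree x := Finset.card_le_card hsub
  · -- the value of the degree
    rw [hdegc]
    -- relate the vertex-level filter to the quaternion-level filter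
    have hbij : (Finset.univ.filter fun y : Vtx n => gmap f y.1 ≠ 0).card
        = (Finset.univ.filter fun a : ℍ[ZMod (2^n)] =>
            gmap f a ≠ 0 ∧ a ≠ 1 ∧ a ≠ -1).card := by
      apply Finset.card_bij (fun y _ => y.1)
      · intro y hy
        rw [Finset.mem_filter] at hy ⊢
        exact ⟨Finset.mem_univ _, hy.2, y.2.2.1, y.2.2.2⟩
      · intro a _ b _ h; exact Subtype.ext h
      · intro b hb
        rw [Finset.mem_filter] at hb
        obtain ⟨-, hb1, hb2, hb3⟩ := hb
        have hb0 : b ≠ 0 := fun h => hb1 (by simp [h, gmap])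
        exact ⟨⟨b, hb0, hb2, hb3⟩, Finset.mem_filter.mpr ⟨Finset.mem_univ _, hb1⟩, rfl⟩
    rw [hbij]
    have g1 : gmap f (1 : ℍ[ZMod (2^n)]) ≠ 0 := by
      simp only [gmap, Quaternion.re_one, Quaternion.imI_one, Quaternion.imJ_one,
        Quaternion.imK_one, map_one, map_zero]
      decide
    have gm1 : gmap f (-1 : ℍ[ZMod (2^n)]) ≠ 0 := by
      simp only [gmap, Quaternion.re_neg, Quaternion.imI_neg, Quaternion.imJ_neg,
        Quaternion.imK_neg, Quaternion.re_one, Quaternion.imI_one, Quaternion.imJ_one,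
        Quaternion.imK_one, map_one, map_zero, map_neg, neg_zero, map_one]
      decide
    have hsdiff : (Finset.univ.filter fun a : ℍ[ZMod (2^n)] =>
          gmap f a ≠ 0 ∧ a ≠ 1 ∧ a ≠ -1)
        = (Finset.univ.filter fun a : ℍ[ZMod (2^n)] => gmap f a ≠ 0)
            \ ({1, -1} : Finset (ℍ[ZMod (2^n)])) := by
      ext a
      simp only [Finset.mem_filter, Finset.mem_univ, true_and, Finset.mem_sdiff,
        Finset.mem_insert, Finset.mem_singleton, not_or]
    have hsubset : ({1, -1} : Finset (ℍ[ZMod (2^n)]))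
        ⊆ Finset.univ.filter fun a : ℍ[ZMod (2^n)] => gmap f a ≠ 0 := by
      intro a ha
      rcases Finset.mem_insert.mp ha with rfl | ha
      · simp [g1]
      · rw [Finset.mem_singleton] at ha; subst ha; simp [gm1]
    rw [hsdiff, Finset.card_sdiff_of_subset hsubset, halfcard n hn f]
    have hcards : ({1, -1} : Finset (ℍ[ZMod (2^n)])).card = if n = 1 then 1 else 2 := by
      by_cases h1n : n = 1
      · subst h1n
        have : (-1 : ℍ[ZMod (2^1)]) = 1 := by
          rw [Quaternion.ext_iff]
          refine ⟨?_, ?_, ?_, ?_⟩ <;>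
            simp only [Quaternion.re_neg, Quaternion.imI_neg, Quaternion.imJ_neg,
              Quaternion.imK_neg, Quaternion.re_one, Quaternion.imI_one, Quaternion.imJ_one,
              Quaternion.imK_one, neg_zero] <;> decide
        rw [this, if_pos rfl]
        simp
      · rw [if_neg h1n]
        apply Finset.card_pair
        intro h
        have hre : (1 : ZMod (2^n)) = -1 := by
          have := congrArg QuaternionAlgebra.re h
          simpa using this
        have h2' : (2 : ZMod (2^n)) = 0 := by linear_combination hre
        have := (ZMod.natCast_eq_zero_iff 2 (2^n)).mp (by exact_mod_cast h2')
        have := Nat.le_of_dvd two_pos this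
        have : 2^1 < 2^n := by
          apply Nat.pow_lt_pow_right (by norm_num)
          omega
        omega
    rw [hcards]
    split <;> rfl
end

section
/- In Φ(H(Z_{2^n})), the maximum vertex degree is 2^{4n} - 3 when n = 1 and 2^{4n} - 4 when n > 1, attained by any unit vertex. -/
open Quaternion

lemma fact_lt (n : ℕ) (hn : 1 ≤ n) : Fact (1 < 2 ^ n) :=
  ⟨Nat.one_lt_two_pow (by omega)⟩

lemma cardH (n : ℕ) : Fintype.card (ℍ[ZMod (2 ^ n)]) = 2 ^ (4 * n) := by
  have e : ℍ[ZMod (2 ^ n)] ≃ (Fin 4 → ZMod (2 ^ n)) := QuaternionAlgebra.equivTuple (-1) 0 (-1)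
  rw [Fintype.card_congr e]
  simp [ZMod.card, ← pow_mul, mul_comm]

lemma one_ne_neg_one (n : ℕ) (hn : 1 < n) : (1 : ℍ[ZMod (2 ^ n)]) ≠ -1 := by
  intro h
  have h2 : (1 : ZMod (2 ^ n)) = -1 := congrArg QuaternionAlgebra.re h
  have : ((2 : ℕ) : ZMod (2 ^ n)) = 0 := by push_cast; linear_combination h2
  rw [ZMod.natCast_eq_zero_iff] at this
  have := Nat.le_of_dvd (by norm_num) this
  have : 2 ^ 2 ≤ 2 ^ n := Nat.pow_le_pow_right (by norm_num) hn
  omega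

lemma one_eq_neg_one : (1 : ℍ[ZMod (2 ^ 1)]) = -1 := by
  apply QuaternionAlgebra.ext <;> decide

open scoped Classical in
lemma card_vtx (n : ℕ) (hn : 1 ≤ n) :
    Fintype.card (Vtx n) = if n = 1 then 2 ^ (4 * n) - 2 else 2 ^ (4 * n) - 3 := by
  haveI := fact_lt n hn
  have h01 : (0 : ℍ[ZMod (2 ^ n)]) ≠ 1 := zero_ne_one
  have key : Fintype.card (Vtx n) =
      Fintype.card (ℍ[ZMod (2 ^ n)]) - ({0, 1, -1} : Finset (ℍ[ZMod (2 ^ n)])).card := by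
    show Fintype.card {x : ℍ[ZMod (2 ^ n)] // x ≠ 0 ∧ x ≠ 1 ∧ x ≠ -1} = _
    rw [Fintype.card_subtype]
    have : Finset.filter (fun x : ℍ[ZMod (2 ^ n)] => x ≠ 0 ∧ x ≠ 1 ∧ x ≠ -1) Finset.univ
        = Finset.univ \ {0, 1, -1} := by
      ext x; simp [and_comm, and_assoc]
    rw [this, Finset.card_sdiff_of_subset (Finset.subset_univ _), Finset.card_univ]
  rw [key, cardH]
  by_cases h1 : n = 1
  · subst h1
    rw [← one_eq_neg_one]
    simp [h01.symm]
  · have hne := one_ne_neg_one n (by omega)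
    have h0n : (0 : ℍ[ZMod (2 ^ n)]) ≠ -1 := by
      intro h; exact h01 (by rw [← neg_neg (1 : ℍ[ZMod (2 ^ n)]), ← h, neg_zero])
    simp [h1, Finset.card_insert_of_notMem, h01, h0n, hne]

open scoped Classical in
lemma degree_unit (n : ℕ) (x : Vtx n) (hx : IsUnit x.1) :
    (Phi n).degree x = Fintype.card (Vtx n) - 1 := by
  rw [← SimpleGraph.card_neighborFinset_eq_degree]
  have : (Phi n).neighborFinset x = Finset.univ.erase x := by
    ext y
    simp only [SimpleGraph.mem_neighborFinset, Finset.mem_erase, Finset.mem_univ, and_true]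
    constructor
    · exact fun h => h.1.symm
    · intro h
      refine ⟨fun hh => h hh.symm, Or.inl ?_⟩
      rw [Ne, hx.mul_right_eq_zero]
      exact y.2.1
  rw [this, Finset.card_erase_of_mem (Finset.mem_univ _), Finset.card_univ]

open scoped Classical in
/-- The maximum degree of `Φ(ℍ(ℤ/2^n))` is `2^(4n) - 3` when `n = 1` and `2^(4n) - 4`
when `n > 1`, attained by every unit vertex. -/
theorem Phi_maxDegree (n : ℕ) (hn : 1 ≤ n) :
    (∀ y : Vtx n, (Phi n).degree y ≤ (if n = 1 then 2 ^ (4 * n) - 3 else 2 ^ (4 * n) - 4)) ∧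
      (∀ x : Vtx n, IsUnit x.1 →
        (Phi n).degree x = (if n = 1 then 2 ^ (4 * n) - 3 else 2 ^ (4 * n) - 4)) := by
  have hpow : 2 ^ 4 ≤ 2 ^ (4 * n) := Nat.pow_le_pow_right (by norm_num) (by omega)
  have hcard := card_vtx n hn
  have hgoal : Fintype.card (Vtx n) - 1 =
      (if n = 1 then 2 ^ (4 * n) - 3 else 2 ^ (4 * n) - 4) := by
    rw [hcard]; split <;> omega
  constructor
  · intro y
    have := (Phi n).degree_lt_card_verts y
    omega
  · intro x hx
    rw [degree_unit n x hx, hgoal]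
end

section
/- Write vertices a = (a_1,a_2,a_3,a_4) and b = (b_1,b_2,b_3,b_4) of Φ(H(Z_{2^n})) with k = min_i ν_2(a_i), l = min_j ν_2(b_j), a = 2^k α, b = 2^l β, and let ν be the minimum 2-adic valuation (as integers) of the four coefficients of the quaternion product αβ. Then a and b are adjacent in Φ(H(Z_{2^n})) if and only if k + l + ν < n. -/
section Crux
-- bridge: odd integers cast to ZMod 4
lemma odd_cast4 (a : ℤ) (h : ¬(2:ℤ) ∣ a) : (a : ZMod 4) = 1 ∨ (a : ZMod 4) = 3 := by
  obtain ⟨k, hk⟩ := Int.odd_iff.mpr (by omega : a % 2 = 1)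
  subst hk; push_cast
  generalize (k : ZMod 4) = z
  revert z; decide

lemma cast4_odd (a : ℤ) (h : (a : ZMod 4) = 1 ∨ (a : ZMod 4) = 3) : ¬(2:ℤ) ∣ a := by
  rintro ⟨c, rfl⟩
  push_cast at h
  revert h
  generalize (c : ZMod 4) = z
  revert z; decide

lemma odd_cast8 (a : ℤ) (h : ¬(2:ℤ) ∣ a) :
    (a : ZMod 8) = 1 ∨ (a : ZMod 8) = 3 ∨ (a : ZMod 8) = 5 ∨ (a : ZMod 8) = 7 := by
  obtain ⟨k, hk⟩ := Int.odd_iff.mpr (by omega : a % 2 = 1)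
  subst hk; push_cast
  generalize (k : ZMod 8) = z
  revert z; decide

lemma sumsq8 (a1 a2 a3 a4 : ℤ)
    (h : ¬(2:ℤ) ∣ a1 ∨ ¬(2:ℤ) ∣ a2 ∨ ¬(2:ℤ) ∣ a3 ∨ ¬(2:ℤ) ∣ a4) :
    ¬ (8:ℤ) ∣ a1^2 + a2^2 + a3^2 + a4^2 := by
  intro hd
  have h0 : ((a1^2 + a2^2 + a3^2 + a4^2 : ℤ) : ZMod 8) = 0 :=
    (ZMod.intCast_zmod_eq_zero_iff_dvd _ 8).mpr (by exact_mod_cast hd)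
  push_cast at h0
  have key : ∀ z1 z2 z3 z4 : ZMod 8,
      (z1 = 1 ∨ z1 = 3 ∨ z1 = 5 ∨ z1 = 7) → z1^2 + z2^2 + z3^2 + z4^2 ≠ 0 := by decide
  rcases h with h | h | h | h
  · exact key (↑a1) (↑a2) (↑a3) (↑a4) (odd_cast8 _ h) h0
  · exact key (↑a2) (↑a1) (↑a3) (↑a4) (odd_cast8 _ h) (by linear_combination h0)
  · exact key (↑a3) (↑a1) (↑a2) (↑a4) (odd_cast8 _ h) (by linear_combination h0)
  · exact key (↑a4) (↑a1) (↑a2) (↑a3) (odd_cast8 _ h) (by linear_combination h0)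

lemma dec2 (s : ℤ) (h : ¬ (8:ℤ) ∣ s) : ∃ i : ℕ, i ≤ 2 ∧ ∃ u : ℤ, ¬(2:ℤ) ∣ u ∧ s = 2^i * u := by
  rcases Int.even_or_odd s with ⟨c, hc⟩ | ⟨c, hc⟩
  · rcases Int.even_or_odd c with ⟨d, hd⟩ | ⟨d, hd⟩
    · rcases Int.even_or_odd d with ⟨e, he⟩ | ⟨e, he⟩
      · exact absurd (by subst hc hd he; exact ⟨e, by ring⟩) h
      · exact ⟨2, by norm_num, d, by omega, by subst hc hd; ring⟩
    · exact ⟨1, by norm_num, c, by omega, by subst hc; ring⟩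
  · exact ⟨0, by norm_num, s, by omega, by ring⟩

lemma uv_lemma {i j : ℕ} {u v w : ℤ} (hu : ¬(2:ℤ) ∣ u) (hv : ¬(2:ℤ) ∣ v) (m : ℕ)
    (hij : i + j < m) (hw : (2:ℤ)^(i+j) * (u*v) = 2^m * w) : False := by
  have h2 : (2:ℤ)^(i+j) * (u*v) = 2^(i+j) * (2^(m-(i+j)) * w) := by
    rw [hw, ← mul_assoc, ← pow_add, show i+j+(m-(i+j)) = m from by omega]
  have h3 : u * v = 2^(m-(i+j)) * w := mul_left_cancel₀ (by positivity) h2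
  have h4 : (2:ℤ) ∣ u * v := h3 ▸ Dvd.dvd.mul_right (dvd_pow_self 2 (by omega)) w
  rcases Prime.dvd_or_dvd Int.prime_two h4 with h | h
  · exact hu h
  · exact hv h

lemma no64 (s t : ℤ) (hs : ¬(8:ℤ) ∣ s) (ht : ¬(8:ℤ) ∣ t) (h : (2:ℤ)^6 ∣ s * t) : False := by
  obtain ⟨i, hi, u, hu, hsu⟩ := dec2 s hs
  obtain ⟨j, hj, v, hv, htv⟩ := dec2 t ht
  obtain ⟨w, hw⟩ := h
  have g1 : i + j < 6 := by omega
  have g2 : (2:ℤ)^(i+j) * (u*v) = 2^6 * w := by rw [← hw, hsu, htv, pow_add]; ring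
  exact uv_lemma hu hv 6 g1 g2

lemma dvd4 (s t : ℤ) (hs : ¬(8:ℤ) ∣ s) (ht : ¬(8:ℤ) ∣ t) (h : (2:ℤ)^4 ∣ s * t) :
    (4:ℤ) ∣ s ∧ (4:ℤ) ∣ t := by
  obtain ⟨i, hi, u, hu, hsu⟩ := dec2 s hs
  obtain ⟨j, hj, v, hv, htv⟩ := dec2 t ht
  obtain ⟨w, hw⟩ := h
  have g2 : (2:ℤ)^(i+j) * (u*v) = 2^4 * w := by rw [← hw, hsu, htv, pow_add]; ring
  have hij : ¬ (i + j < 4) := fun hlt => uv_lemma hu hv 4 hlt g2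
  have hi2 : i = 2 := by omega
  have hj2 : j = 2 := by omega
  subst hi2 hj2
  exact ⟨⟨u, by rw [hsu]; ring⟩, ⟨v, by rw [htv]; ring⟩⟩

-- the n = 2 case
lemma key4Z (a1 a2 a3 a4 b1 b2 b3 b4 : ℤ)
    (ha : ¬(2:ℤ) ∣ a1 ∨ ¬(2:ℤ) ∣ a2 ∨ ¬(2:ℤ) ∣ a3 ∨ ¬(2:ℤ) ∣ a4)
    (hb : ¬(2:ℤ) ∣ b1 ∨ ¬(2:ℤ) ∣ b2 ∨ ¬(2:ℤ) ∣ b3 ∨ ¬(2:ℤ) ∣ b4)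
    (h1 : (4:ℤ) ∣ a1*b1 - a2*b2 - a3*b3 - a4*b4)
    (h2 : (4:ℤ) ∣ a1*b2 + a2*b1 + a3*b4 - a4*b3)
    (h3 : (4:ℤ) ∣ a1*b3 - a2*b4 + a3*b1 + a4*b2)
    (h4 : (4:ℤ) ∣ a1*b4 + a2*b3 - a3*b2 + a4*b1) :
    (4:ℤ) ∣ b1*a1 - b2*a2 - b3*a3 - b4*a4 ∧
    (4:ℤ) ∣ b1*a2 + b2*a1 + b3*a4 - b4*a3 ∧
    (4:ℤ) ∣ b1*a3 - b2*a4 + b3*a1 + b4*a2 ∧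
    (4:ℤ) ∣ b1*a4 + b2*a3 - b3*a2 + b4*a1 := by
  -- step 1: all coefficients are odd
  have hsq : ∀ x : ℤ, (4:ℤ) ∣ x → (2:ℤ)^4 ∣ x^2 := by
    rintro x ⟨c, rfl⟩; exact ⟨c^2, by ring⟩
  have heuler : (a1^2+a2^2+a3^2+a4^2) * (b1^2+b2^2+b3^2+b4^2) =
      (a1*b1 - a2*b2 - a3*b3 - a4*b4)^2 + (a1*b2 + a2*b1 + a3*b4 - a4*b3)^2 +
      (a1*b3 - a2*b4 + a3*b1 + a4*b2)^2 + (a1*b4 + a2*b3 - a3*b2 + a4*b1)^2 := by ring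
  have h16 : (2:ℤ)^4 ∣ (a1^2+a2^2+a3^2+a4^2) * (b1^2+b2^2+b3^2+b4^2) := by
    rw [heuler]
    exact dvd_add (dvd_add (dvd_add (hsq _ h1) (hsq _ h2)) (hsq _ h3)) (hsq _ h4)
  obtain ⟨hda, hdb⟩ := dvd4 _ _ (sumsq8 _ _ _ _ ha) (sumsq8 _ _ _ _ hb) h16
  have allodd : ∀ x1 x2 x3 x4 : ℤ,
      (¬(2:ℤ) ∣ x1 ∨ ¬(2:ℤ) ∣ x2 ∨ ¬(2:ℤ) ∣ x3 ∨ ¬(2:ℤ) ∣ x4) →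
      (4:ℤ) ∣ x1^2 + x2^2 + x3^2 + x4^2 →
      ¬(2:ℤ) ∣ x1 ∧ ¬(2:ℤ) ∣ x2 ∧ ¬(2:ℤ) ∣ x3 ∧ ¬(2:ℤ) ∣ x4 := by
    intro x1 x2 x3 x4 hx hd
    have h0 : ((x1^2 + x2^2 + x3^2 + x4^2 : ℤ) : ZMod 4) = 0 :=
      (ZMod.intCast_zmod_eq_zero_iff_dvd _ 4).mpr (by exact_mod_cast hd)
    push_cast at h0
    have key1 : ∀ z1 z2 z3 z4 : ZMod 4,
        ((z1 = 1 ∨ z1 = 3) ∨ (z2 = 1 ∨ z2 = 3) ∨ (z3 = 1 ∨ z3 = 3) ∨ (z4 = 1 ∨ z4 = 3)) →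
        z1^2 + z2^2 + z3^2 + z4^2 = 0 → (z1 = 1 ∨ z1 = 3) := by decide
    have key2 : ∀ z1 z2 z3 z4 : ZMod 4,
        ((z1 = 1 ∨ z1 = 3) ∨ (z2 = 1 ∨ z2 = 3) ∨ (z3 = 1 ∨ z3 = 3) ∨ (z4 = 1 ∨ z4 = 3)) →
        z1^2 + z2^2 + z3^2 + z4^2 = 0 → (z2 = 1 ∨ z2 = 3) := by decide
    have key3 : ∀ z1 z2 z3 z4 : ZMod 4,
        ((z1 = 1 ∨ z1 = 3) ∨ (z2 = 1 ∨ z2 = 3) ∨ (z3 = 1 ∨ z3 = 3) ∨ (z4 = 1 ∨ z4 = 3)) →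
        z1^2 + z2^2 + z3^2 + z4^2 = 0 → (z3 = 1 ∨ z3 = 3) := by decide
    have key4 : ∀ z1 z2 z3 z4 : ZMod 4,
        ((z1 = 1 ∨ z1 = 3) ∨ (z2 = 1 ∨ z2 = 3) ∨ (z3 = 1 ∨ z3 = 3) ∨ (z4 = 1 ∨ z4 = 3)) →
        z1^2 + z2^2 + z3^2 + z4^2 = 0 → (z4 = 1 ∨ z4 = 3) := by decide
    have hx' : ((x1:ZMod 4) = 1 ∨ (x1:ZMod 4) = 3) ∨ ((x2:ZMod 4) = 1 ∨ (x2:ZMod 4) = 3) ∨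
        ((x3:ZMod 4) = 1 ∨ (x3:ZMod 4) = 3) ∨ ((x4:ZMod 4) = 1 ∨ (x4:ZMod 4) = 3) := by
      rcases hx with h | h | h | h
      · exact Or.inl (odd_cast4 _ h)
      · exact Or.inr (Or.inl (odd_cast4 _ h))
      · exact Or.inr (Or.inr (Or.inl (odd_cast4 _ h)))
      · exact Or.inr (Or.inr (Or.inr (odd_cast4 _ h)))
    exact ⟨cast4_odd _ (key1 _ _ _ _ hx' h0), cast4_odd _ (key2 _ _ _ _ hx' h0),
      cast4_odd _ (key3 _ _ _ _ hx' h0), cast4_odd _ (key4 _ _ _ _ hx' h0)⟩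
  obtain ⟨oa1, oa2, oa3, oa4⟩ := allodd _ _ _ _ ha hda
  obtain ⟨ob1, ob2, ob3, ob4⟩ := allodd _ _ _ _ hb hdb
  -- step 2: cross terms are even
  have cross : ∀ x y z w : ℤ, ¬(2:ℤ) ∣ x → ¬(2:ℤ) ∣ y → ¬(2:ℤ) ∣ z → ¬(2:ℤ) ∣ w →
      (4:ℤ) ∣ 2*(x*y - z*w) := by
    intro x y z w hx hy hz hw
    have h1 : x % 2 = 1 := by omega
    have h2 : y % 2 = 1 := by omega
    have h3 : z % 2 = 1 := by omega
    have h4 : w % 2 = 1 := by omega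
    obtain ⟨c, rfl⟩ := Int.odd_iff.mpr h1
    obtain ⟨d, rfl⟩ := Int.odd_iff.mpr h2
    obtain ⟨e, rfl⟩ := Int.odd_iff.mpr h3
    obtain ⟨f, rfl⟩ := Int.odd_iff.mpr h4
    exact ⟨c*d*2 + c + d - (e*f*2 + e + f), by ring⟩
  refine ⟨?_, ?_, ?_, ?_⟩
  · rw [show b1*a1 - b2*a2 - b3*a3 - b4*a4 = a1*b1 - a2*b2 - a3*b3 - a4*b4 from by ring]
    exact h1
  · rw [show b1*a2 + b2*a1 + b3*a4 - b4*a3 =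
      (a1*b2 + a2*b1 + a3*b4 - a4*b3) - 2*(a3*b4 - a4*b3) from by ring]
    exact dvd_sub h2 (cross _ _ _ _ oa3 ob4 oa4 ob3)
  · rw [show b1*a3 - b2*a4 + b3*a1 + b4*a2 =
      (a1*b3 - a2*b4 + a3*b1 + a4*b2) - 2*(a4*b2 - a2*b4) from by ring]
    exact dvd_sub h3 (cross _ _ _ _ oa4 ob2 oa2 ob4)
  · rw [show b1*a4 + b2*a3 - b3*a2 + b4*a1 =
      (a1*b4 + a2*b3 - a3*b2 + a4*b1) - 2*(a2*b3 - a3*b2) from by ring]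
    exact dvd_sub h4 (cross _ _ _ _ oa2 ob3 oa3 ob2)



lemma cancel2 {n : ℕ} {X : ℤ} (h : (2:ℤ)^(n+1) ∣ 2*X) : (2:ℤ)^n ∣ X := by
  rcases h with ⟨c, hc⟩
  rw [pow_succ'] at hc
  exact ⟨c, by linarith⟩

lemma mul2 {n : ℕ} {X : ℤ} (h : (2:ℤ)^n ∣ X) : (2:ℤ)^(n+1) ∣ 2*X := by
  rcases h with ⟨c, rfl⟩
  exact ⟨c, by rw [pow_succ']; ring⟩

lemma crux : ∀ (n : ℕ) (a1 a2 a3 a4 b1 b2 b3 b4 : ℤ),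
    (2:ℤ)^n ∣ a1*b1 - a2*b2 - a3*b3 - a4*b4 →
    (2:ℤ)^n ∣ a1*b2 + a2*b1 + a3*b4 - a4*b3 →
    (2:ℤ)^n ∣ a1*b3 - a2*b4 + a3*b1 + a4*b2 →
    (2:ℤ)^n ∣ a1*b4 + a2*b3 - a3*b2 + a4*b1 →
    (2:ℤ)^n ∣ b1*a1 - b2*a2 - b3*a3 - b4*a4 ∧
    (2:ℤ)^n ∣ b1*a2 + b2*a1 + b3*a4 - b4*a3 ∧
    (2:ℤ)^n ∣ b1*a3 - b2*a4 + b3*a1 + b4*a2 ∧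
    (2:ℤ)^n ∣ b1*a4 + b2*a3 - b3*a2 + b4*a1 := by
  intro n
  induction n with
  | zero =>
    intro a1 a2 a3 a4 b1 b2 b3 b4 _ _ _ _
    exact ⟨one_dvd _, one_dvd _, one_dvd _, one_dvd _⟩
  | succ n ih =>
    intro a1 a2 a3 a4 b1 b2 b3 b4 h1 h2 h3 h4
    rcases Nat.eq_zero_or_pos n with rfl | hn
    · -- modulus 2 : symmetric up to even cross terms
      simp only [Nat.zero_add, zero_add, pow_one] at h1 h2 h3 h4 ⊢
      refine ⟨?_, ?_, ?_, ?_⟩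
      · rw [show b1*a1 - b2*a2 - b3*a3 - b4*a4 = a1*b1 - a2*b2 - a3*b3 - a4*b4 from by ring]
        exact h1
      · rw [show b1*a2 + b2*a1 + b3*a4 - b4*a3 =
          (a1*b2 + a2*b1 + a3*b4 - a4*b3) - 2*(a3*b4 - a4*b3) from by ring]
        exact dvd_sub h2 (Dvd.intro _ rfl)
      · rw [show b1*a3 - b2*a4 + b3*a1 + b4*a2 =
          (a1*b3 - a2*b4 + a3*b1 + a4*b2) - 2*(a4*b2 - a2*b4) from by ring]
        exact dvd_sub h3 (Dvd.intro _ rfl)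
      · rw [show b1*a4 + b2*a3 - b3*a2 + b4*a1 =
          (a1*b4 + a2*b3 - a3*b2 + a4*b1) - 2*(a2*b3 - a3*b2) from by ring]
        exact dvd_sub h4 (Dvd.intro _ rfl)
    · by_cases hA : (2:ℤ) ∣ a1 ∧ (2:ℤ) ∣ a2 ∧ (2:ℤ) ∣ a3 ∧ (2:ℤ) ∣ a4
      · obtain ⟨⟨a1', rfl⟩, ⟨a2', rfl⟩, ⟨a3', rfl⟩, ⟨a4', rfl⟩⟩ := hA
        have h1' : (2:ℤ)^n ∣ a1'*b1 - a2'*b2 - a3'*b3 - a4'*b4 := cancel2 (by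
          rw [show (2:ℤ)*(a1'*b1 - a2'*b2 - a3'*b3 - a4'*b4) =
            2*a1'*b1 - 2*a2'*b2 - 2*a3'*b3 - 2*a4'*b4 from by ring]
          exact h1)
        have h2' : (2:ℤ)^n ∣ a1'*b2 + a2'*b1 + a3'*b4 - a4'*b3 := cancel2 (by
          rw [show (2:ℤ)*(a1'*b2 + a2'*b1 + a3'*b4 - a4'*b3) =
            2*a1'*b2 + 2*a2'*b1 + 2*a3'*b4 - 2*a4'*b3 from by ring]
          exact h2)
        have h3' : (2:ℤ)^n ∣ a1'*b3 - a2'*b4 + a3'*b1 + a4'*b2 := cancel2 (by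
          rw [show (2:ℤ)*(a1'*b3 - a2'*b4 + a3'*b1 + a4'*b2) =
            2*a1'*b3 - 2*a2'*b4 + 2*a3'*b1 + 2*a4'*b2 from by ring]
          exact h3)
        have h4' : (2:ℤ)^n ∣ a1'*b4 + a2'*b3 - a3'*b2 + a4'*b1 := cancel2 (by
          rw [show (2:ℤ)*(a1'*b4 + a2'*b3 - a3'*b2 + a4'*b1) =
            2*a1'*b4 + 2*a2'*b3 - 2*a3'*b2 + 2*a4'*b1 from by ring]
          exact h4)
        obtain ⟨q1, q2, q3, q4⟩ := ih a1' a2' a3' a4' b1 b2 b3 b4 h1' h2' h3' h4'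
        refine ⟨?_, ?_, ?_, ?_⟩
        · rw [show b1*(2*a1') - b2*(2*a2') - b3*(2*a3') - b4*(2*a4') =
            2*(b1*a1' - b2*a2' - b3*a3' - b4*a4') from by ring]
          exact mul2 q1
        · rw [show b1*(2*a2') + b2*(2*a1') + b3*(2*a4') - b4*(2*a3') =
            2*(b1*a2' + b2*a1' + b3*a4' - b4*a3') from by ring]
          exact mul2 q2
        · rw [show b1*(2*a3') - b2*(2*a4') + b3*(2*a1') + b4*(2*a2') =
            2*(b1*a3' - b2*a4' + b3*a1' + b4*a2') from by ring]
          exact mul2 q3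
        · rw [show b1*(2*a4') + b2*(2*a3') - b3*(2*a2') + b4*(2*a1') =
            2*(b1*a4' + b2*a3' - b3*a2' + b4*a1') from by ring]
          exact mul2 q4
      · by_cases hB : (2:ℤ) ∣ b1 ∧ (2:ℤ) ∣ b2 ∧ (2:ℤ) ∣ b3 ∧ (2:ℤ) ∣ b4
        · obtain ⟨⟨b1', rfl⟩, ⟨b2', rfl⟩, ⟨b3', rfl⟩, ⟨b4', rfl⟩⟩ := hB
          have h1' : (2:ℤ)^n ∣ a1*b1' - a2*b2' - a3*b3' - a4*b4' := cancel2 (by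
            rw [show (2:ℤ)*(a1*b1' - a2*b2' - a3*b3' - a4*b4') =
              a1*(2*b1') - a2*(2*b2') - a3*(2*b3') - a4*(2*b4') from by ring]
            exact h1)
          have h2' : (2:ℤ)^n ∣ a1*b2' + a2*b1' + a3*b4' - a4*b3' := cancel2 (by
            rw [show (2:ℤ)*(a1*b2' + a2*b1' + a3*b4' - a4*b3') =
              a1*(2*b2') + a2*(2*b1') + a3*(2*b4') - a4*(2*b3') from by ring]
            exact h2)
          have h3' : (2:ℤ)^n ∣ a1*b3' - a2*b4' + a3*b1' + a4*b2' := cancel2 (by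
            rw [show (2:ℤ)*(a1*b3' - a2*b4' + a3*b1' + a4*b2') =
              a1*(2*b3') - a2*(2*b4') + a3*(2*b1') + a4*(2*b2') from by ring]
            exact h3)
          have h4' : (2:ℤ)^n ∣ a1*b4' + a2*b3' - a3*b2' + a4*b1' := cancel2 (by
            rw [show (2:ℤ)*(a1*b4' + a2*b3' - a3*b2' + a4*b1') =
              a1*(2*b4') + a2*(2*b3') - a3*(2*b2') + a4*(2*b1') from by ring]
            exact h4)
          obtain ⟨q1, q2, q3, q4⟩ := ih a1 a2 a3 a4 b1' b2' b3' b4' h1' h2' h3' h4'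
          refine ⟨?_, ?_, ?_, ?_⟩
          · rw [show (2*b1')*a1 - (2*b2')*a2 - (2*b3')*a3 - (2*b4')*a4 =
              2*(b1'*a1 - b2'*a2 - b3'*a3 - b4'*a4) from by ring]
            exact mul2 q1
          · rw [show (2*b1')*a2 + (2*b2')*a1 + (2*b3')*a4 - (2*b4')*a3 =
              2*(b1'*a2 + b2'*a1 + b3'*a4 - b4'*a3) from by ring]
            exact mul2 q2
          · rw [show (2*b1')*a3 - (2*b2')*a4 + (2*b3')*a1 + (2*b4')*a2 =
              2*(b1'*a3 - b2'*a4 + b3'*a1 + b4'*a2) from by ring]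
            exact mul2 q3
          · rw [show (2*b1')*a4 + (2*b2')*a3 - (2*b3')*a2 + (2*b4')*a1 =
              2*(b1'*a4 + b2'*a3 - b3'*a2 + b4'*a1) from by ring]
            exact mul2 q4
        · -- both primitive
          have ha : ¬(2:ℤ) ∣ a1 ∨ ¬(2:ℤ) ∣ a2 ∨ ¬(2:ℤ) ∣ a3 ∨ ¬(2:ℤ) ∣ a4 := by tauto
          have hb : ¬(2:ℤ) ∣ b1 ∨ ¬(2:ℤ) ∣ b2 ∨ ¬(2:ℤ) ∣ b3 ∨ ¬(2:ℤ) ∣ b4 := by tauto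
          rcases Nat.lt_or_ge n 2 with hn2 | hn2
          · -- n = 1, modulus 4
            have hne : n = 1 := by omega
            subst hne
            have d4 : ∀ X : ℤ, (2:ℤ)^2 ∣ X → (4:ℤ) ∣ X := by
              intro X hX; rw [show ((4:ℤ) = 2^2) from by norm_num]; exact hX
            have d4' : ∀ X : ℤ, (4:ℤ) ∣ X → (2:ℤ)^2 ∣ X := by
              intro X hX; rw [show ((2:ℤ)^2 = 4) from by norm_num]; exact hX
            obtain ⟨q1, q2, q3, q4⟩ :=
              key4Z a1 a2 a3 a4 b1 b2 b3 b4 ha hb (d4 _ h1) (d4 _ h2) (d4 _ h3) (d4 _ h4)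
            exact ⟨d4' _ q1, d4' _ q2, d4' _ q3, d4' _ q4⟩
          · -- modulus ≥ 8 : impossible
            exfalso
            have pd : (2:ℤ)^3 ∣ (2:ℤ)^(n+1) := pow_dvd_pow 2 (by omega)
            have e8 : ∀ X : ℤ, (2:ℤ)^(n+1) ∣ X → (8:ℤ) ∣ X := by
              intro X hX
              rw [show ((8:ℤ) = 2^3) from by norm_num]
              exact dvd_trans pd hX
            have hsq : ∀ X : ℤ, (8:ℤ) ∣ X → (2:ℤ)^6 ∣ X^2 := by
              rintro X ⟨c, rfl⟩; exact ⟨c^2, by ring⟩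
            have heuler : (a1^2+a2^2+a3^2+a4^2) * (b1^2+b2^2+b3^2+b4^2) =
                (a1*b1 - a2*b2 - a3*b3 - a4*b4)^2 + (a1*b2 + a2*b1 + a3*b4 - a4*b3)^2 +
                (a1*b3 - a2*b4 + a3*b1 + a4*b2)^2 + (a1*b4 + a2*b3 - a3*b2 + a4*b1)^2 := by
              ring
            have h64 : (2:ℤ)^6 ∣ (a1^2+a2^2+a3^2+a4^2) * (b1^2+b2^2+b3^2+b4^2) := by
              rw [heuler]
              exact dvd_add (dvd_add (dvd_add (hsq _ (e8 _ h1)) (hsq _ (e8 _ h2)))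
                (hsq _ (e8 _ h3))) (hsq _ (e8 _ h4))
            exact no64 _ _ (sumsq8 _ _ _ _ ha) (sumsq8 _ _ _ _ hb) h64



open Quaternion

/-- The `2`-adic valuation of an element of `ℤ/2^n`, computed on its integer
representative, with `ν₂(0)` taken to be `n`. -/
def v2 (n : ℕ) (x : ZMod (2 ^ n)) : ℕ :=
  if x = 0 then n else padicValNat 2 x.val

/-- The minimum `2`-adic valuation of the four coefficients of a quaternion over `ℤ/2^n`. -/
def minVal (n : ℕ) (x : ℍ[ZMod (2 ^ n)]) : ℕ :=
  min (min (v2 n x.re) (v2 n x.imI)) (min (v2 n x.imJ) (v2 n x.imK))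

/-- The reduced quaternion `α` with `x = 2^k α`, where `k = minVal n x`: each
coefficient's integer representative is divided by `2^k`. -/
def reduceQ (n : ℕ) (x : ℍ[ZMod (2 ^ n)]) : ℍ[ZMod (2 ^ n)] :=
  ⟨((x.re.val / 2 ^ minVal n x : ℕ) : ZMod (2 ^ n)),
   ((x.imI.val / 2 ^ minVal n x : ℕ) : ZMod (2 ^ n)),
   ((x.imJ.val / 2 ^ minVal n x : ℕ) : ZMod (2 ^ n)),
   ((x.imK.val / 2 ^ minVal n x : ℕ) : ZMod (2 ^ n))⟩

section Layer

variable {n : ℕ}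

instance : NeZero (2^n) := ⟨pow_ne_zero n two_ne_zero⟩

lemma val_cast_back (z : ZMod (2^n)) : ((z.val : ℕ) : ZMod (2^n)) = z := by
  rw [ZMod.natCast_val, ZMod.cast_id]

lemma pow_v2_dvd (x : ZMod (2^n)) : 2^(v2 n x) ∣ x.val := by
  unfold v2
  split
  · simp_all [ZMod.val_zero]
  · exact pow_padicValNat_dvd

lemma scalar_zero_iff (m : ℕ) (x : ZMod (2^n)) :
    (2^m : ZMod (2^n)) * x = 0 ↔ n ≤ m + v2 n x := by
  by_cases hx : x = 0
  · subst hx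
    simp [v2]
  · have hval : x.val ≠ 0 := fun h => hx ((ZMod.val_eq_zero x).mp h)
    have key : (2^m : ZMod (2^n)) * x = ((2^m * x.val : ℕ) : ZMod (2^n)) := by
      push_cast
      rw [val_cast_back]
    rw [key, ZMod.natCast_eq_zero_iff]
    rw [padicValNat_dvd_iff]
    have hmx : 2^m * x.val ≠ 0 := by positivity
    rw [padicValNat.mul (pow_ne_zero m two_ne_zero) hval, padicValNat.prime_pow]
    unfold v2
    rw [if_neg hx]
    constructor
    · rintro (h | h)
      · exact absurd h hmx
      · exact h
    · exact Or.inr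

lemma minVal_le_re (x : ℍ[ZMod (2^n)]) : minVal n x ≤ v2 n x.re :=
  le_trans (min_le_left _ _) (min_le_left _ _)
lemma minVal_le_imI (x : ℍ[ZMod (2^n)]) : minVal n x ≤ v2 n x.imI :=
  le_trans (min_le_left _ _) (min_le_right _ _)
lemma minVal_le_imJ (x : ℍ[ZMod (2^n)]) : minVal n x ≤ v2 n x.imJ :=
  le_trans (min_le_right _ _) (min_le_left _ _)
lemma minVal_le_imK (x : ℍ[ZMod (2^n)]) : minVal n x ≤ v2 n x.imK :=
  le_trans (min_le_right _ _) (min_le_right _ _)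

lemma quat_scalar_zero_iff (m : ℕ) (q : ℍ[ZMod (2^n)]) :
    ((2^m : ZMod (2^n)) : ℍ[ZMod (2^n)]) * q = 0 ↔ n ≤ m + minVal n q := by
  rw [Quaternion.coe_mul_eq_smul]
  rw [Quaternion.ext_iff]
  simp only [Quaternion.re_smul, Quaternion.imI_smul, Quaternion.imJ_smul,
    Quaternion.imK_smul, Quaternion.re_zero, Quaternion.imI_zero, Quaternion.imJ_zero,
    Quaternion.imK_zero, smul_eq_mul]
  rw [scalar_zero_iff, scalar_zero_iff, scalar_zero_iff, scalar_zero_iff]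
  unfold minVal
  omega

lemma reduce_eq (x : ℍ[ZMod (2^n)]) :
    x = ((2^(minVal n x) : ZMod (2^n)) : ℍ[ZMod (2^n)]) * reduceQ n x := by
  have comp : ∀ (z : ZMod (2^n)), minVal n x ≤ v2 n z →
      z = (2^(minVal n x) : ZMod (2^n)) * ((z.val / 2 ^ minVal n x : ℕ) : ZMod (2^n)) := by
    intro z hz
    have hdvd : 2^(minVal n x) ∣ z.val := dvd_trans (pow_dvd_pow 2 hz) (pow_v2_dvd z)
    have : (2^(minVal n x) * (z.val / 2 ^ minVal n x) : ℕ) = z.val := Nat.mul_div_cancel' hdvd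
    calc z = ((z.val : ℕ) : ZMod (2^n)) := (val_cast_back z).symm
    _ = ((2^(minVal n x) * (z.val / 2 ^ minVal n x) : ℕ) : ZMod (2^n)) := by rw [this]
    _ = (2^(minVal n x) : ZMod (2^n)) * ((z.val / 2 ^ minVal n x : ℕ) : ZMod (2^n)) := by
        push_cast; ring
  rw [Quaternion.coe_mul_eq_smul]
  apply Quaternion.ext
  · exact comp x.re (minVal_le_re x)
  · exact comp x.imI (minVal_le_imI x)
  · exact comp x.imJ (minVal_le_imJ x)
  · exact comp x.imK (minVal_le_imK x)

lemma prod_zero_iff (a b : ℍ[ZMod (2^n)]) :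
    a * b = 0 ↔ n ≤ minVal n a + minVal n b + minVal n (reduceQ n a * reduceQ n b) := by
  have key : a * b = ((2^(minVal n a + minVal n b) : ZMod (2^n)) : ℍ[ZMod (2^n)]) *
      (reduceQ n a * reduceQ n b) := by
    conv_lhs => rw [reduce_eq a, reduce_eq b]
    rw [Quaternion.coe_mul_eq_smul, Quaternion.coe_mul_eq_smul, Quaternion.coe_mul_eq_smul,
      smul_mul_smul_comm, pow_add]
  rw [key, quat_scalar_zero_iff]

lemma comm_zero (a b : ℍ[ZMod (2^n)]) (h : a * b = 0) : b * a = 0 := by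
  have h1 : (a*b).re = 0 := by rw [h]; rfl
  have h2 : (a*b).imI = 0 := by rw [h]; rfl
  have h3 : (a*b).imJ = 0 := by rw [h]; rfl
  have h4 : (a*b).imK = 0 := by rw [h]; rfl
  rw [Quaternion.re_mul] at h1
  rw [Quaternion.imI_mul] at h2
  rw [Quaternion.imJ_mul] at h3
  rw [Quaternion.imK_mul] at h4
  have tod : ∀ X : ZMod (2^n), X = 0 → ∀ Y : ℤ, ((Y : ℤ) : ZMod (2^n)) = X →
      (2:ℤ)^n ∣ Y := by
    intro X hX Y hY
    have := (ZMod.intCast_zmod_eq_zero_iff_dvd Y (2^n)).mp (by rw [hY, hX])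
    exact_mod_cast this
  have cast_re : ∀ x y : ℍ[ZMod (2^n)],
      (((x.re.val:ℤ)*(y.re.val:ℤ) - (x.imI.val:ℤ)*(y.imI.val:ℤ) - (x.imJ.val:ℤ)*(y.imJ.val:ℤ)
        - (x.imK.val:ℤ)*(y.imK.val:ℤ) : ℤ) : ZMod (2^n)) =
      x.re*y.re - x.imI*y.imI - x.imJ*y.imJ - x.imK*y.imK := by
    intro x y; push_cast [val_cast_back]; ring
  have cast_imI : ∀ x y : ℍ[ZMod (2^n)],
      (((x.re.val:ℤ)*(y.imI.val:ℤ) + (x.imI.val:ℤ)*(y.re.val:ℤ) + (x.imJ.val:ℤ)*(y.imK.val:ℤ)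
        - (x.imK.val:ℤ)*(y.imJ.val:ℤ) : ℤ) : ZMod (2^n)) =
      x.re*y.imI + x.imI*y.re + x.imJ*y.imK - x.imK*y.imJ := by
    intro x y; push_cast [val_cast_back]; ring
  have cast_imJ : ∀ x y : ℍ[ZMod (2^n)],
      (((x.re.val:ℤ)*(y.imJ.val:ℤ) - (x.imI.val:ℤ)*(y.imK.val:ℤ) + (x.imJ.val:ℤ)*(y.re.val:ℤ)
        + (x.imK.val:ℤ)*(y.imI.val:ℤ) : ℤ) : ZMod (2^n)) =
      x.re*y.imJ - x.imI*y.imK + x.imJ*y.re + x.imK*y.imI := by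
    intro x y; push_cast [val_cast_back]; ring
  have cast_imK : ∀ x y : ℍ[ZMod (2^n)],
      (((x.re.val:ℤ)*(y.imK.val:ℤ) + (x.imI.val:ℤ)*(y.imJ.val:ℤ) - (x.imJ.val:ℤ)*(y.imI.val:ℤ)
        + (x.imK.val:ℤ)*(y.re.val:ℤ) : ℤ) : ZMod (2^n)) =
      x.re*y.imK + x.imI*y.imJ - x.imJ*y.imI + x.imK*y.re := by
    intro x y; push_cast [val_cast_back]; ring
  have d1 := tod _ h1 _ (cast_re a b)
  have d2 := tod _ h2 _ (cast_imI a b)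
  have d3 := tod _ h3 _ (cast_imJ a b)
  have d4 := tod _ h4 _ (cast_imK a b)
  obtain ⟨q1, q2, q3, q4⟩ := crux n (a.re.val:ℤ) (a.imI.val:ℤ) (a.imJ.val:ℤ) (a.imK.val:ℤ)
    (b.re.val:ℤ) (b.imI.val:ℤ) (b.imJ.val:ℤ) (b.imK.val:ℤ) d1 d2 d3 d4
  have back : ∀ Y : ℤ, (2:ℤ)^n ∣ Y → ((Y : ℤ) : ZMod (2^n)) = 0 := by
    intro Y hY
    exact (ZMod.intCast_zmod_eq_zero_iff_dvd Y (2^n)).mpr (by exact_mod_cast hY)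
  apply Quaternion.ext
  · rw [Quaternion.re_mul, ← cast_re b a, back _ q1]; rfl
  · rw [Quaternion.imI_mul, ← cast_imI b a, back _ q2]; rfl
  · rw [Quaternion.imJ_mul, ← cast_imJ b a, back _ q3]; rfl
  · rw [Quaternion.imK_mul, ← cast_imK b a, back _ q4]; rfl

end Layer

/-- Adjacency criterion for `Φ(ℍ(ℤ/2^n))`: writing `a = 2^k α`, `b = 2^l β` with
`k`, `l` the minimal `2`-adic valuations of the coefficients, and `ν` the minimal
`2`-adic valuation of the coefficients of the product `αβ`, the vertices `a` and `b`
are adjacent iff `k + l + ν < n`. -/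
theorem Phi_adj_iff_valuation (n : ℕ) (hn : 1 ≤ n) (a b : Vtx n) (hab : a ≠ b)
    (k l ν : ℕ) (hk : k = minVal n a.1) (hl : l = minVal n b.1)
    (hν : ν = minVal n (reduceQ n a.1 * reduceQ n b.1)) :
    (Phi n).Adj a b ↔ k + l + ν < n := by
  subst hk hl hν
  have hzero := prod_zero_iff a.1 b.1
  constructor
  · intro h
    have h' : a ≠ b ∧ (a.1 * b.1 ≠ 0 ∨ b.1 * a.1 ≠ 0) := h
    have hne : a.1 * b.1 ≠ 0 := by
      rcases h'.2 with h0 | h0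
      · exact h0
      · exact fun hz => h0 (comm_zero _ _ hz)
    rcases Nat.lt_or_ge (minVal n a.1 + minVal n b.1 +
      minVal n (reduceQ n a.1 * reduceQ n b.1)) n with hlt | hge
    · exact hlt
    · exact absurd (hzero.mpr hge) hne
  · intro hlt
    refine ⟨hab, Or.inl (fun h0 => ?_)⟩
    have := hzero.mp h0
    omega
end Crux
end
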